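/- arXiv:2212.09007 — 8 statements merged into one kernel-verified Lean document; each statement's English description precedes it below -/
import Mathlib

section
/- Under the setting of the Gibbs measures ρ̃_u with density proportional to exp(−λ(A + uH)) relative to π, suppose π({θ : H(θ) < B}) > 0 for a given B ∈ ℝ. Then there exists a unique ū ≥ 0 such that ρ̃_{ū} minimizes ∫ A dρ + (1/λ) KL(ρ‖π) over all probability measures ρ ≪ π satisfying ∫ H dρ ≤ B; moreover ū = 0 if Λ(0) ≤ B, and otherwise ū > 0 is the unique positive number with Λ(ū) = B, where Λ(u) = ∫ H dρ̃_u. -/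
/-!
For every `u` the Gibbs measure `ρ̃_u = π.tilted (-λ (A + u H))` minimises the penalised objective
`∫ A dρ + u ∫ H dρ + λ⁻¹ KL(ρ‖π)`: Gibbs' inequality `0 ≤ KL(ρ‖π.tilted f)` is the
Donsker–Varadhan bound `∫ f dρ - log ∫ exp f dπ ≤ KL(ρ‖π)`, with equality at `ρ = π.tilted f`.
Hence for `u ≥ 0` with `u (Λ(u) - B) = 0` the measure `ρ̃_u` solves the constrained problem.

Since `ρ̃_u` is the tilt of `ρ̃_0` by `-λ u H`, `Λ(u) = K'(-λ u)` where `K` is the cumulant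
generating function of `H` under `ρ̃_0`. Its second derivative is a variance under a tilted measure,
so `Λ` is continuous, and strictly decreasing unless `H` is a.e. constant. Gibbs' inequality for
the tilted measures also gives `K(t) ≤ t K'(t)`, while `K(t) ≥ t b + log ρ̃_0 {H ≤ b}` for `t ≤ 0`;
with `b < B` this forces `Λ(u) < B` for large `u`, and the intermediate value theorem yields `ū`.
-/

open MeasureTheory

/-- Kullback–Leibler divergence `∫ log(dρ/dπ) dρ` (real-valued version). -/
noncomputable def klDiv {Θ : Type*} [MeasurableSpace Θ] (ρ π : Measure Θ) : ℝ :=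
  ∫ θ, Real.log ((ρ.rnDeriv π θ).toReal) ∂ρ

/-- The Gibbs measure with density proportional to `exp (-lam * (A θ + u * H θ))`
with respect to `prior`. -/
noncomputable def gibbsMeasure {Θ : Type*} [MeasurableSpace Θ] (prior : Measure Θ)
    (lam : ℝ) (A H : Θ → ℝ) (u : ℝ) : Measure Θ :=
  prior.tilted fun θ => -(lam * (A θ + u * H θ))

/-- `Λ(u) = ∫ H dρ̃_u`. -/
noncomputable def LambdaFn {Θ : Type*} [MeasurableSpace Θ] (prior : Measure Θ)
    (lam : ℝ) (A H : Θ → ℝ) (u : ℝ) : ℝ :=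
  ∫ θ, H θ ∂(gibbsMeasure prior lam A H u)

open ProbabilityTheory Real

section KullbackLeibler

variable {Θ : Type*} [MeasurableSpace Θ] {ρ μ : Measure Θ} {f : Θ → ℝ}

lemma klDiv_eq_integral_llr : klDiv ρ μ = ∫ θ, llr ρ μ θ ∂ρ := rfl

lemma klDiv_nonneg [IsProbabilityMeasure ρ] [IsProbabilityMeasure μ] (hρμ : ρ ≪ μ)
    (hllr : Integrable (llr ρ μ) ρ) : 0 ≤ klDiv ρ μ := by
  simpa [klDiv_eq_integral_llr] using
    InformationTheory.integral_llr_add_sub_measure_univ_nonneg hρμ hllr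

lemma llr_tilted_self_ae_eq [SigmaFinite μ] (hf : Integrable (fun θ ↦ exp (f θ)) μ) :
    llr (μ.tilted f) μ =ᵐ[μ.tilted f] fun θ ↦ f θ - log (∫ θ, exp (f θ) ∂μ) :=
  (tilted_absolutelyContinuous μ f).ae_le (log_rnDeriv_tilted_left_self hf)

lemma klDiv_tilted_self [IsProbabilityMeasure μ] (hf : Integrable (fun θ ↦ exp (f θ)) μ)
    (hfρ : Integrable f (μ.tilted f)) :
    klDiv (μ.tilted f) μ = ∫ θ, f θ ∂(μ.tilted f) - log (∫ θ, exp (f θ) ∂μ) := by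
  have := isProbabilityMeasure_tilted hf
  rw [klDiv_eq_integral_llr, integral_congr_ae (llr_tilted_self_ae_eq hf),
    integral_sub hfρ (integrable_const _)]
  simp

lemma integrable_llr_tilted_self [IsFiniteMeasure μ] (hf : Integrable (fun θ ↦ exp (f θ)) μ)
    (hfρ : Integrable f (μ.tilted f)) : Integrable (llr (μ.tilted f) μ) (μ.tilted f) :=
  (hfρ.sub (integrable_const _)).congr (llr_tilted_self_ae_eq hf).symm

lemma integral_sub_log_integral_exp_le_klDiv [IsProbabilityMeasure ρ] [IsProbabilityMeasure μ]
    (hρμ : ρ ≪ μ) (hllr : Integrable (llr ρ μ) ρ) (hfρ : Integrable f ρ)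
    (hf : Integrable (fun θ ↦ exp (f θ)) μ) :
    ∫ θ, f θ ∂ρ - log (∫ θ, exp (f θ) ∂μ) ≤ klDiv ρ μ := by
  have := isProbabilityMeasure_tilted hf
  have h := klDiv_nonneg (hρμ.trans (absolutelyContinuous_tilted hf))
    (integrable_llr_tilted_right hρμ hfρ hllr hf)
  rw [klDiv_eq_integral_llr, integral_llr_tilted_right hρμ hfρ hf hllr] at h
  rw [klDiv_eq_integral_llr]
  linarith

end KullbackLeibler

section CumulantGeneratingFunction

variable {Ω : Type*} [MeasurableSpace Ω] {μ : Measure Ω} {X : Ω → ℝ}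

lemma integrableExpSet_eq_univ_of_abs_le [IsFiniteMeasure μ] (hX : AEMeasurable X μ) {C : ℝ}
    (hC : ∀ ω, |X ω| ≤ C) : integrableExpSet X μ = Set.univ :=
  Set.eq_univ_of_forall fun _ ↦
    integrable_exp_mul_of_mem_Icc hX (ae_of_all _ fun ω ↦ abs_le.mp (hC ω))

lemma continuous_deriv_cgf (h : integrableExpSet X μ = Set.univ) :
    Continuous (deriv (cgf X μ)) := by
  have := (analyticOnNhd_cgf (X := X) (μ := μ)).deriv.continuousOn
  rwa [h, interior_univ, continuousOn_univ] at this

lemma strictMono_deriv_cgf [IsFiniteMeasure μ] (h : integrableExpSet X μ = Set.univ)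
    (hX : ∀ c, ¬ X =ᵐ[μ] fun _ ↦ c) : StrictMono (deriv (cgf X μ)) := by
  refine strictMono_of_deriv_pos fun t ↦ ?_
  have ht : t ∈ interior (integrableExpSet X μ) := by simp [h]
  have h2 : deriv (deriv (cgf X μ)) = iteratedDeriv 2 (cgf X μ) := by
    rw [iteratedDeriv_succ, iteratedDeriv_one]
  rw [h2, ← variance_tilted_mul ht]
  have hac : μ ≪ μ.tilted (t * X ·) :=
    absolutelyContinuous_tilted (integrable_of_mem_integrableExpSet (h ▸ Set.mem_univ t))
  refine (variance_nonneg _ _).lt_of_ne' fun hvar ↦ hX (μ.tilted (t * X ·))[X] ?_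
  exact hac.ae_le (ae_eq_integral_of_variance_eq_zero (memLp_tilted_mul ht 2) hvar)

lemma cgf_le_mul_deriv_cgf [IsProbabilityMeasure μ] (h : integrableExpSet X μ = Set.univ)
    (t : ℝ) : cgf X μ t ≤ t * deriv (cgf X μ) t := by
  have ht : t ∈ interior (integrableExpSet X μ) := by simp [h]
  have hexp := integrable_of_mem_integrableExpSet (h ▸ Set.mem_univ t)
  have := isProbabilityMeasure_tilted hexp
  have hint : Integrable (t * X ·) (μ.tilted (t * X ·)) :=
    ((memLp_tilted_mul ht 1).integrable le_rfl).const_mul t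
  have h0 := klDiv_nonneg (tilted_absolutelyContinuous μ _) (integrable_llr_tilted_self hexp hint)
  rw [klDiv_tilted_self hexp hint, integral_const_mul, integral_tilted_mul_self ht] at h0
  rw [cgf, mgf]
  linarith

lemma mul_add_log_le_cgf [IsFiniteMeasure μ] (hXm : Measurable X) {t b : ℝ}
    (hexp : Integrable (fun ω ↦ exp (t * X ω)) μ) (ht : t ≤ 0) (hb : 0 < μ {ω | X ω ≤ b}) :
    t * b + log (μ.real {ω | X ω ≤ b}) ≤ cgf X μ t := by
  have hS : MeasurableSet {ω | X ω ≤ b} := hXm measurableSet_Iic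
  have hδ : 0 < μ.real {ω | X ω ≤ b} := ENNReal.toReal_pos hb.ne' (measure_ne_top _ _)
  rw [← log_exp (t * b), ← log_mul (exp_pos _).ne' hδ.ne', cgf]
  refine log_le_log (by positivity) ?_
  calc exp (t * b) * μ.real {ω | X ω ≤ b} = ∫ ω in {ω | X ω ≤ b}, exp (t * b) ∂μ := by
        rw [setIntegral_const, smul_eq_mul, mul_comm]
    _ ≤ ∫ ω in {ω | X ω ≤ b}, exp (t * X ω) ∂μ :=
        setIntegral_mono_on (integrable_const _).integrableOn hexp.integrableOn hS
          fun ω hω ↦ exp_le_exp.mpr (mul_le_mul_of_nonpos_left hω ht)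
    _ ≤ mgf X μ t := setIntegral_le_integral hexp (ae_of_all _ fun _ ↦ (exp_pos _).le)

lemma exists_pos_measure_le_of_pos_measure_lt {B : ℝ} (hB : 0 < μ {ω | X ω < B}) :
    ∃ b < B, 0 < μ {ω | X ω ≤ b} := by
  have hU : {ω | X ω < B} ⊆ ⋃ n : ℕ, {ω | X ω ≤ B - 1 / (n + 1)} := fun ω hω ↦ by
    obtain ⟨n, hn⟩ := exists_nat_one_div_lt (sub_pos.mpr (show X ω < B from hω))
    exact Set.mem_iUnion.mpr ⟨n, show X ω ≤ _ by linarith⟩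
  obtain ⟨n, hn⟩ := exists_measure_pos_of_not_measure_iUnion_null
    fun h0 ↦ hB.ne' (measure_mono_null hU h0)
  exact ⟨_, sub_lt_self B (by positivity), hn⟩

lemma exists_deriv_cgf_lt [IsProbabilityMeasure μ] (h : integrableExpSet X μ = Set.univ)
    (hXm : Measurable X) {B : ℝ} (hB : 0 < μ {ω | X ω < B}) :
    ∃ t < 0, deriv (cgf X μ) t < B := by
  obtain ⟨b, hbB, hb⟩ := exists_pos_measure_le_of_pos_measure_lt hB
  set δ := μ.real {ω | X ω ≤ b}
  have hlogδ : log δ ≤ 0 := log_nonpos measureReal_nonneg measureReal_le_one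
  set t := (log δ - 1) / (B - b)
  have hBb : 0 < B - b := sub_pos.mpr hbB
  have ht : t < 0 := div_neg_of_neg_of_pos (by linarith) hBb
  have htB : t * (B - b) = log δ - 1 := div_mul_cancel₀ _ hBb.ne'
  have hlow := mul_add_log_le_cgf hXm (h ▸ Set.mem_univ t : t ∈ integrableExpSet X μ) ht.le hb
  have hup := cgf_le_mul_deriv_cgf h t
  refine ⟨t, ht, lt_of_not_ge fun hge ↦ ?_⟩
  nlinarith [mul_le_mul_of_nonpos_left hge ht.le]

end CumulantGeneratingFunction

section Gibbs

variable {Θ : Type*} [MeasurableSpace Θ] {prior : Measure Θ} {A H : Θ → ℝ} {CA CH : ℝ}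

lemma integrable_of_abs_le {μ : Measure Θ} [IsFiniteMeasure μ] {f : Θ → ℝ} (hf : Measurable f)
    {C : ℝ} (hC : ∀ θ, |f θ| ≤ C) : Integrable f μ :=
  .of_bound hf.aestronglyMeasurable C (ae_of_all _ hC)

lemma gibbsMeasure_absolutelyContinuous (lam u : ℝ) : gibbsMeasure prior lam A H u ≪ prior :=
  tilted_absolutelyContinuous _ _

variable [IsProbabilityMeasure prior] (hA : Measurable A) (hH : Measurable H)
  (hAbd : ∀ θ, |A θ| ≤ CA) (hHbd : ∀ θ, |H θ| ≤ CH)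
include hA hH hAbd hHbd

lemma integrable_exp_gibbsPotential {μ : Measure Θ} [IsFiniteMeasure μ] (lam u : ℝ) :
    Integrable (fun θ ↦ exp (-(lam * (A θ + u * H θ)))) μ := by
  have hbd θ : |A θ + u * H θ| ≤ CA + |u| * CH := by
    grw [abs_add_le, abs_mul, hAbd, hHbd]
  simpa [neg_mul] using integrable_exp_mul_of_mem_Icc (t := -lam)
    (hA.add (hH.const_mul u)).aemeasurable (ae_of_all _ fun θ ↦ abs_le.mp (hbd θ))

lemma isProbabilityMeasure_gibbsMeasure (lam u : ℝ) :
    IsProbabilityMeasure (gibbsMeasure prior lam A H u) :=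
  isProbabilityMeasure_tilted (integrable_exp_gibbsPotential hA hH hAbd hHbd lam u)

lemma absolutelyContinuous_gibbsMeasure (lam u : ℝ) : prior ≪ gibbsMeasure prior lam A H u :=
  absolutelyContinuous_tilted (integrable_exp_gibbsPotential hA hH hAbd hHbd lam u)

lemma gibbsMeasure_eq_tilted_gibbsMeasure_zero (lam u : ℝ) :
    gibbsMeasure prior lam A H u
      = (gibbsMeasure prior lam A H 0).tilted fun θ ↦ -(lam * u) * H θ := by
  rw [gibbsMeasure, gibbsMeasure,
    tilted_tilted (integrable_exp_gibbsPotential hA hH hAbd hHbd lam 0)]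
  congr 1
  ext θ
  simp only [Pi.add_apply]
  ring

lemma integrableExpSet_gibbsMeasure_zero (lam : ℝ) :
    integrableExpSet H (gibbsMeasure prior lam A H 0) = Set.univ :=
  have := isProbabilityMeasure_gibbsMeasure (prior := prior) hA hH hAbd hHbd lam 0
  integrableExpSet_eq_univ_of_abs_le hH.aemeasurable hHbd

lemma LambdaFn_eq_deriv_cgf (lam u : ℝ) :
    LambdaFn prior lam A H u = deriv (cgf H (gibbsMeasure prior lam A H 0)) (-(lam * u)) := by
  rw [LambdaFn, gibbsMeasure_eq_tilted_gibbsMeasure_zero hA hH hAbd hHbd,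
    integral_tilted_mul_self (by simp [integrableExpSet_gibbsMeasure_zero hA hH hAbd hHbd])]

lemma continuous_LambdaFn (lam : ℝ) : Continuous (LambdaFn prior lam A H) := by
  simp_rw [funext (LambdaFn_eq_deriv_cgf hA hH hAbd hHbd lam)]
  exact (continuous_deriv_cgf (integrableExpSet_gibbsMeasure_zero hA hH hAbd hHbd lam)).comp
    (continuous_const.mul continuous_id).neg

lemma strictAnti_LambdaFn {lam : ℝ} (hlam : 0 < lam) (hH_ne : ∀ c, ¬ H =ᵐ[prior] fun _ ↦ c) :
    StrictAnti (LambdaFn prior lam A H) := by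
  have := isProbabilityMeasure_gibbsMeasure (prior := prior) hA hH hAbd hHbd lam 0
  have hac := absolutelyContinuous_gibbsMeasure (prior := prior) hA hH hAbd hHbd lam 0
  have hmono := strictMono_deriv_cgf (integrableExpSet_gibbsMeasure_zero hA hH hAbd hHbd lam)
    fun c hc ↦ hH_ne c (hac.ae_le hc)
  simp_rw [funext (LambdaFn_eq_deriv_cgf hA hH hAbd hHbd lam)]
  exact hmono.comp_strictAnti fun u v huv ↦ by nlinarith

lemma exists_LambdaFn_lt {lam : ℝ} (hlam : 0 < lam) {B : ℝ} (hB : 0 < prior {θ | H θ < B}) :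
    ∃ u > 0, LambdaFn prior lam A H u < B := by
  have := isProbabilityMeasure_gibbsMeasure (prior := prior) hA hH hAbd hHbd lam 0
  have hac := absolutelyContinuous_gibbsMeasure (prior := prior) hA hH hAbd hHbd lam 0
  obtain ⟨t, ht, htB⟩ := exists_deriv_cgf_lt
    (integrableExpSet_gibbsMeasure_zero hA hH hAbd hHbd lam) hH
    (pos_iff_ne_zero.mpr fun h0 ↦ hB.ne' (hac h0))
  refine ⟨-t / lam, div_pos (neg_pos.mpr ht) hlam, ?_⟩
  rwa [LambdaFn_eq_deriv_cgf hA hH hAbd hHbd, mul_div_cancel₀ _ hlam.ne', neg_neg]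

lemma integrable_gibbsPotential {μ : Measure Θ} [IsFiniteMeasure μ] (lam u : ℝ) :
    Integrable (fun θ ↦ -(lam * (A θ + u * H θ))) μ :=
  (((integrable_of_abs_le hA hAbd).add ((integrable_of_abs_le hH hHbd).const_mul u)).const_mul
    lam).neg

lemma integral_gibbsPotential {μ : Measure Θ} [IsFiniteMeasure μ] (lam u : ℝ) :
    ∫ θ, -(lam * (A θ + u * H θ)) ∂μ = -(lam * (∫ θ, A θ ∂μ + u * ∫ θ, H θ ∂μ)) := by
  have hiA := integrable_of_abs_le (μ := μ) hA hAbd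
  have hiH := integrable_of_abs_le (μ := μ) hH hHbd
  rw [integral_neg, integral_const_mul, integral_add hiA (hiH.const_mul u), integral_const_mul]

lemma gibbs_penalized_objective_le {lam : ℝ} (hlam : 0 < lam) (u : ℝ) (ρ : Measure Θ)
    [IsProbabilityMeasure ρ] (hρ : ρ ≪ prior) (hllr : Integrable (llr ρ prior) ρ) :
    ∫ θ, A θ ∂(gibbsMeasure prior lam A H u) + u * LambdaFn prior lam A H u
        + 1 / lam * klDiv (gibbsMeasure prior lam A H u) prior
      ≤ ∫ θ, A θ ∂ρ + u * ∫ θ, H θ ∂ρ + 1 / lam * klDiv ρ prior := by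
  have := isProbabilityMeasure_gibbsMeasure (prior := prior) hA hH hAbd hHbd lam u
  have hexp := integrable_exp_gibbsPotential (μ := prior) hA hH hAbd hHbd lam u
  have hlow := integral_sub_log_integral_exp_le_klDiv hρ hllr
    (integrable_gibbsPotential hA hH hAbd hHbd lam u) hexp
  have hgibbs := klDiv_tilted_self hexp (integrable_gibbsPotential hA hH hAbd hHbd lam u)
  rw [integral_gibbsPotential hA hH hAbd hHbd] at hlow hgibbs
  rw [← gibbsMeasure] at hgibbs
  rw [hgibbs, LambdaFn]
  have := mul_le_mul_of_nonneg_left hlow (one_div_pos.mpr hlam).le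
  field_simp at this ⊢
  linarith

lemma gibbs_objective_le_of_complementary_slackness {lam : ℝ} (hlam : 0 < lam) {u B : ℝ}
    (hu : 0 ≤ u) (hslack : u * (LambdaFn prior lam A H u - B) = 0) (ρ : Measure Θ)
    [IsProbabilityMeasure ρ] (hρ : ρ ≪ prior) (hllr : Integrable (llr ρ prior) ρ)
    (hρB : ∫ θ, H θ ∂ρ ≤ B) :
    ∫ θ, A θ ∂(gibbsMeasure prior lam A H u) + 1 / lam * klDiv (gibbsMeasure prior lam A H u) prior
      ≤ ∫ θ, A θ ∂ρ + 1 / lam * klDiv ρ prior := by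
  have := gibbs_penalized_objective_le hA hH hAbd hHbd hlam u ρ hρ hllr
  linarith [mul_le_mul_of_nonneg_left hρB hu]

end Gibbs

/-- If `prior {H < B} > 0`, there is a unique `ū ≥ 0` such that `ρ̃_ū` minimizes
`∫ A dρ + (1/lam) KL(ρ‖prior)` over probability measures `ρ ≪ prior` with `∫ H dρ ≤ B`;
moreover `ū = 0` if `Λ(0) ≤ B`, and otherwise `ū > 0` is the unique positive solution of
`Λ(ū) = B`. -/
theorem stmt4 {Θ : Type*} [MeasurableSpace Θ] (prior : Measure Θ)
    [IsProbabilityMeasure prior]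
    (lam : ℝ) (hlam : 0 < lam)
    (A H : Θ → ℝ) (hA : Measurable A) (hH : Measurable H)
    (CA CH : ℝ) (hAbd : ∀ θ, |A θ| ≤ CA) (hHbd : ∀ θ, |H θ| ≤ CH)
    (B : ℝ) (hqual : 0 < prior {θ | H θ < B}) :
    ∃ ubar : ℝ, 0 ≤ ubar ∧
      LambdaFn prior lam A H ubar ≤ B ∧
      (∀ ρ : Measure Θ, IsProbabilityMeasure ρ → ρ ≪ prior →
        Integrable (fun θ => Real.log ((ρ.rnDeriv prior θ).toReal)) ρ →
        (∫ θ, H θ ∂ρ) ≤ B →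
        (∫ θ, A θ ∂(gibbsMeasure prior lam A H ubar))
            + (1 / lam) * klDiv (gibbsMeasure prior lam A H ubar) prior
          ≤ (∫ θ, A θ ∂ρ) + (1 / lam) * klDiv ρ prior) ∧
      (LambdaFn prior lam A H 0 ≤ B → ubar = 0) ∧
      (B < LambdaFn prior lam A H 0 →
        0 < ubar ∧ LambdaFn prior lam A H ubar = B ∧
          ∀ u : ℝ, 0 < u → LambdaFn prior lam A H u = B → u = ubar) := by
  by_cases hle : LambdaFn prior lam A H 0 ≤ B
  · refine ⟨0, le_rfl, hle, fun ρ _ hρ hllr hρB ↦ ?_, fun _ ↦ rfl, fun h ↦ absurd h hle.not_gt⟩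
    exact gibbs_objective_le_of_complementary_slackness hA hH hAbd hHbd hlam le_rfl (zero_mul _)
      ρ hρ hllr hρB
  rw [not_le] at hle
  have hH_ne (c : ℝ) : ¬ H =ᵐ[prior] fun _ ↦ c := by
    intro hc
    have := isProbabilityMeasure_gibbsMeasure (prior := prior) hA hH hAbd hHbd lam 0
    have hc0 : LambdaFn prior lam A H 0 = c := by
      rw [LambdaFn, integral_congr_ae ((gibbsMeasure_absolutelyContinuous lam 0).ae_le hc)]
      simp
    exact hqual.ne' (measure_mono_null (fun θ hθ ↦ (hθ.trans (hc0 ▸ hle)).ne) hc)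
  obtain ⟨u₁, hu₁, hu₁B⟩ := exists_LambdaFn_lt hA hH hAbd hHbd hlam hqual
  obtain ⟨ubar, hubar, hubarB⟩ := intermediate_value_Icc' hu₁.le
    (continuous_LambdaFn hA hH hAbd hHbd lam).continuousOn ⟨hu₁B.le, hle.le⟩
  have hubar0 : 0 < ubar := hubar.1.lt_of_ne fun h ↦ hle.ne' (h ▸ hubarB)
  refine ⟨ubar, hubar0.le, hubarB.le, fun ρ _ hρ hllr hρB ↦ ?_, fun h ↦ absurd h hle.not_ge,
    fun _ ↦ ⟨hubar0, hubarB, fun u _ hu ↦ ?_⟩⟩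
  · exact gibbs_objective_le_of_complementary_slackness hA hH hAbd hHbd hlam hubar0.le
      (by rw [hubarB, sub_self, mul_zero]) ρ hρ hllr hρB
  · exact (strictAnti_LambdaFn hA hH hAbd hHbd hlam hH_ne).injective (hu.trans hubarB.symm)
end

section
/- In the constrained Gibbs-measure setting (A, H bounded measurable, λ > 0, π({H < B}) > 0, ū the optimal multiplier), the duality gap is zero: ∫ A dρ̃_{ū} + (1/λ) KL(ρ̃_{ū}‖π) = sup_{u ≥ 0} [∫ A dρ̃_u + u(∫ H dρ̃_u − B) + (1/λ) KL(ρ̃_u‖π)]. -/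
/-!
With `f_u = -lam (A + u H)` and `Z(u) = ∫ exp f_u dπ`, the Gibbs identity
`∫ f_u dρ̃_u - KL(ρ̃_u‖π) = log Z(u)` turns the bracket under the supremum into the concave
function `-u B - (1/lam) log Z(u)`. Jensen's inequality under `ρ̃_v` gives the supporting line
`log Z(u) ≥ log Z(v) - lam (u - v) Λ(v)`, so the bracket at `u` exceeds the one at `ū` by at most
`(u - ū) (Λ(ū) - B)`. Complementary slackness makes this `≤ 0` for `u ≥ 0`, and makes the
bracket at `ū` equal to the left-hand side.
-/

open MeasureTheory

open Real

section Tilted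

variable {α : Type*} [MeasurableSpace α] {μ : Measure α}

lemma integrable_of_abs_le_s5 [IsFiniteMeasure μ] {g : α → ℝ} {C : ℝ} (hg : Measurable g)
    (hC : ∀ x, |g x| ≤ C) : Integrable g μ :=
  Integrable.of_bound hg.aestronglyMeasurable C (ae_of_all _ hC)

lemma integrable_exp_of_abs_le [IsFiniteMeasure μ] {g : α → ℝ} {C : ℝ} (hg : Measurable g)
    (hC : ∀ x, |g x| ≤ C) : Integrable (fun x ↦ exp (g x)) μ :=
  integrable_of_abs_le_s5 (C := exp C) (by fun_prop) fun x ↦ by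
    rw [abs_of_pos (exp_pos _)]
    exact exp_le_exp.2 (abs_le.1 (hC x)).2

lemma integral_sub_klDiv_tilted [SigmaFinite μ] [NeZero μ] {f : α → ℝ}
    (hf : Integrable (fun x ↦ exp (f x)) μ) (hfi : Integrable f (μ.tilted f)) :
    ∫ x, f x ∂μ.tilted f - klDiv (μ.tilted f) μ = log (∫ x, exp (f x) ∂μ) := by
  have := isProbabilityMeasure_tilted hf
  have hkl : klDiv (μ.tilted f) μ = ∫ x, (f x - log (∫ x, exp (f x) ∂μ)) ∂μ.tilted f :=
    integral_congr_ae ((tilted_absolutelyContinuous μ f).ae_eq (log_rnDeriv_tilted_left_self hf))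
  rw [hkl, integral_sub hfi (integrable_const _), integral_const]
  simp

lemma integral_sub_le_log_integral_exp_sub [NeZero μ] {f g : α → ℝ}
    (hf : Integrable (fun x ↦ exp (f x)) μ) (hg : Integrable (fun x ↦ exp (g x)) μ)
    (hgf : Integrable (fun x ↦ g x - f x) (μ.tilted f)) :
    ∫ x, (g x - f x) ∂μ.tilted f ≤ log (∫ x, exp (g x) ∂μ) - log (∫ x, exp (f x) ∂μ) := by
  have := isProbabilityMeasure_tilted hf
  have hexp_int : Integrable (fun x ↦ exp (g x - f x)) (μ.tilted f) := by
    refine (integrable_tilted_iff hf _).2 ?_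
    simpa only [smul_eq_mul, ← exp_add, add_sub_cancel] using hg
  have hexp : ∫ x, exp (g x - f x) ∂μ.tilted f = (∫ x, exp (g x) ∂μ) / ∫ x, exp (f x) ∂μ := by
    simp only [integral_exp_tilted f, Pi.add_apply, add_sub_cancel]
  have hjensen : exp (∫ x, (g x - f x) ∂μ.tilted f) ≤ ∫ x, exp (g x - f x) ∂μ.tilted f :=
    convexOn_exp.map_integral_le continuousOn_exp isClosed_univ
      (ae_of_all _ fun _ ↦ Set.mem_univ _) hgf hexp_int
  rw [← log_div (integral_exp_pos hg).ne' (integral_exp_pos hf).ne', ← hexp,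
    le_log_iff_exp_le (integral_exp_pos hexp_int)]
  exact hjensen

end Tilted

section Gibbs

variable {Θ : Type*} [MeasurableSpace Θ] {prior : Measure Θ} [IsFiniteMeasure prior]
  {lam : ℝ} {A H : Θ → ℝ} {CA CH : ℝ}

noncomputable def gibbsExponent (lam : ℝ) (A H : Θ → ℝ) (u : ℝ) (θ : Θ) : ℝ :=
  -(lam * (A θ + u * H θ))

noncomputable def partitionFn (prior : Measure Θ) (lam : ℝ) (A H : Θ → ℝ) (u : ℝ) : ℝ :=
  ∫ θ, exp (gibbsExponent lam A H u θ) ∂prior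

noncomputable def dualObjective (prior : Measure Θ) (lam : ℝ) (A H : Θ → ℝ) (B u : ℝ) : ℝ :=
  (∫ θ, A θ ∂(gibbsMeasure prior lam A H u))
    + u * (LambdaFn prior lam A H u - B)
    + (1 / lam) * klDiv (gibbsMeasure prior lam A H u) prior

lemma integrable_exp_gibbsExponent (hA : Measurable A) (hH : Measurable H)
    (hAbd : ∀ θ, |A θ| ≤ CA) (hHbd : ∀ θ, |H θ| ≤ CH) (u : ℝ) :
    Integrable (fun θ ↦ exp (gibbsExponent lam A H u θ)) prior := by
  refine integrable_exp_of_abs_le (C := |lam| * (CA + |u| * CH))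
    (by unfold gibbsExponent; fun_prop) fun θ ↦ ?_
  rw [gibbsExponent, abs_neg, abs_mul]
  gcongr
  calc |A θ + u * H θ| ≤ |A θ| + |u| * |H θ| := by rw [← abs_mul]; exact abs_add_le _ _
    _ ≤ CA + |u| * CH := by gcongr <;> simp [hAbd, hHbd]

lemma isProbabilityMeasure_gibbsMeasure_s5 [NeZero prior] (hA : Measurable A) (hH : Measurable H)
    (hAbd : ∀ θ, |A θ| ≤ CA) (hHbd : ∀ θ, |H θ| ≤ CH) (u : ℝ) :
    IsProbabilityMeasure (gibbsMeasure prior lam A H u) :=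
  isProbabilityMeasure_tilted (integrable_exp_gibbsExponent hA hH hAbd hHbd u)

lemma dualObjective_eq [NeZero prior] (hlam : lam ≠ 0) (hA : Measurable A) (hH : Measurable H)
    (hAbd : ∀ θ, |A θ| ≤ CA) (hHbd : ∀ θ, |H θ| ≤ CH) (B u : ℝ) :
    dualObjective prior lam A H B u = -(u * B) - (1 / lam) * log (partitionFn prior lam A H u) := by
  have := isProbabilityMeasure_gibbsMeasure_s5 (prior := prior) (lam := lam) hA hH hAbd hHbd u
  have hAi : Integrable A (gibbsMeasure prior lam A H u) := integrable_of_abs_le_s5 hA hAbd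
  have hHi : Integrable H (gibbsMeasure prior lam A H u) := integrable_of_abs_le_s5 hH hHbd
  have hexponent : ∫ θ, gibbsExponent lam A H u θ ∂(gibbsMeasure prior lam A H u)
      = -(lam * ((∫ θ, A θ ∂(gibbsMeasure prior lam A H u)) + u * LambdaFn prior lam A H u)) := by
    simp only [gibbsExponent, LambdaFn]
    rw [integral_neg, integral_const_mul, integral_add hAi (hHi.const_mul u), integral_const_mul]
  have hgibbs : ∫ θ, gibbsExponent lam A H u θ ∂(gibbsMeasure prior lam A H u)
      - klDiv (gibbsMeasure prior lam A H u) prior = log (partitionFn prior lam A H u) :=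
    integral_sub_klDiv_tilted (integrable_exp_gibbsExponent hA hH hAbd hHbd u)
      ((hAi.add (hHi.const_mul u)).const_mul lam).neg
  rw [hexponent] at hgibbs
  rw [dualObjective, ← hgibbs]
  field_simp
  ring

lemma log_partitionFn_sub_le [NeZero prior] (hA : Measurable A) (hH : Measurable H)
    (hAbd : ∀ θ, |A θ| ≤ CA) (hHbd : ∀ θ, |H θ| ≤ CH) (u v : ℝ) :
    log (partitionFn prior lam A H v) - lam * (u - v) * LambdaFn prior lam A H v
      ≤ log (partitionFn prior lam A H u) := by
  have := isProbabilityMeasure_gibbsMeasure_s5 (prior := prior) (lam := lam) hA hH hAbd hHbd v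
  have hdiff : (fun θ ↦ gibbsExponent lam A H u θ - gibbsExponent lam A H v θ)
      = fun θ ↦ -(lam * (u - v)) * H θ := by
    funext θ; simp only [gibbsExponent]; ring
  have hjensen : ∫ θ, (gibbsExponent lam A H u θ - gibbsExponent lam A H v θ)
        ∂(gibbsMeasure prior lam A H v)
      ≤ log (partitionFn prior lam A H u) - log (partitionFn prior lam A H v) :=
    integral_sub_le_log_integral_exp_sub (integrable_exp_gibbsExponent hA hH hAbd hHbd v)
      (integrable_exp_gibbsExponent hA hH hAbd hHbd u)
      (hdiff ▸ (integrable_of_abs_le_s5 hH hHbd).const_mul _)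
  rw [hdiff, integral_const_mul] at hjensen
  change _ * LambdaFn prior lam A H v ≤ _ at hjensen
  linarith

lemma dualObjective_le_add [NeZero prior] (hlam : 0 < lam) (hA : Measurable A) (hH : Measurable H)
    (hAbd : ∀ θ, |A θ| ≤ CA) (hHbd : ∀ θ, |H θ| ≤ CH) (B u v : ℝ) :
    dualObjective prior lam A H B u
      ≤ dualObjective prior lam A H B v + (u - v) * (LambdaFn prior lam A H v - B) := by
  rw [dualObjective_eq hlam.ne' hA hH hAbd hHbd, dualObjective_eq hlam.ne' hA hH hAbd hHbd]
  have hline := log_partitionFn_sub_le (prior := prior) (lam := lam) hA hH hAbd hHbd u v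
  have hscaled := mul_le_mul_of_nonneg_left hline (one_div_pos.2 hlam).le
  rw [mul_sub, show 1 / lam * (lam * (u - v) * LambdaFn prior lam A H v)
    = (u - v) * LambdaFn prior lam A H v by field_simp] at hscaled
  linarith

end Gibbs

theorem stmt5_general {Θ : Type*} [MeasurableSpace Θ] (prior : Measure Θ)
    [IsProbabilityMeasure prior]
    (lam : ℝ) (hlam : 0 < lam)
    (A H : Θ → ℝ) (hA : Measurable A) (hH : Measurable H)
    (CA CH : ℝ) (hAbd : ∀ θ, |A θ| ≤ CA) (hHbd : ∀ θ, |H θ| ≤ CH)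
    (B : ℝ)
    (ubar : ℝ) (hubar0 : 0 ≤ ubar)
    (hcase1 : LambdaFn prior lam A H 0 ≤ B → ubar = 0)
    (hcase2 : B < LambdaFn prior lam A H 0 →
      0 < ubar ∧ LambdaFn prior lam A H ubar = B) :
    (∫ θ, A θ ∂(gibbsMeasure prior lam A H ubar))
        + (1 / lam) * klDiv (gibbsMeasure prior lam A H ubar) prior
      = sSup {y : ℝ | ∃ u : ℝ, 0 ≤ u ∧
          y = (∫ θ, A θ ∂(gibbsMeasure prior lam A H u))
              + u * (LambdaFn prior lam A H u - B)
              + (1 / lam) * klDiv (gibbsMeasure prior lam A H u) prior} := by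
  have hslack : ubar * (LambdaFn prior lam A H ubar - B) = 0 := by
    rcases le_or_gt (LambdaFn prior lam A H 0) B with h | h
    · rw [hcase1 h, zero_mul]
    · rw [(hcase2 h).2, sub_self, mul_zero]
  have hsign : ∀ u, 0 ≤ u → (u - ubar) * (LambdaFn prior lam A H ubar - B) ≤ 0 := by
    intro u hu
    rcases le_or_gt (LambdaFn prior lam A H 0) B with h | h
    · rw [hcase1 h, sub_zero]
      exact mul_nonpos_of_nonneg_of_nonpos hu (sub_nonpos.2 h)
    · rw [(hcase2 h).2, sub_self, mul_zero]
  have hgreatest : IsGreatest {y | ∃ u, 0 ≤ u ∧ y = dualObjective prior lam A H B u}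
      (dualObjective prior lam A H B ubar) := by
    refine ⟨⟨ubar, hubar0, rfl⟩, ?_⟩
    rintro _ ⟨u, hu, rfl⟩
    linarith [dualObjective_le_add (prior := prior) hlam hA hH hAbd hHbd B u ubar, hsign u hu]
  change _ = sSup {y | ∃ u, 0 ≤ u ∧ y = dualObjective prior lam A H B u}
  rw [hgreatest.csSup_eq, dualObjective, hslack, add_zero]

/-- zero duality gap: with `ū` the optimal multiplier
(`ū = 0` if `Λ(0) ≤ B`, otherwise `ū > 0` with `Λ(ū) = B`),
`∫ A dρ̃_ū + (1/lam) KL(ρ̃_ū‖prior)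
  = sup_{u ≥ 0} [∫ A dρ̃_u + u (Λ(u) − B) + (1/lam) KL(ρ̃_u‖prior)]`. -/
theorem stmt5 {Θ : Type*} [MeasurableSpace Θ] (prior : Measure Θ)
    [IsProbabilityMeasure prior]
    (lam : ℝ) (hlam : 0 < lam)
    (A H : Θ → ℝ) (hA : Measurable A) (hH : Measurable H)
    (CA CH : ℝ) (hAbd : ∀ θ, |A θ| ≤ CA) (hHbd : ∀ θ, |H θ| ≤ CH)
    (B : ℝ) (hqual : 0 < prior {θ | H θ < B})
    (ubar : ℝ) (hubar0 : 0 ≤ ubar)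
    (hcase1 : LambdaFn prior lam A H 0 ≤ B → ubar = 0)
    (hcase2 : B < LambdaFn prior lam A H 0 →
      0 < ubar ∧ LambdaFn prior lam A H ubar = B) :
    (∫ θ, A θ ∂(gibbsMeasure prior lam A H ubar))
        + (1 / lam) * klDiv (gibbsMeasure prior lam A H ubar) prior
      = sSup {y : ℝ | ∃ u : ℝ, 0 ≤ u ∧
          y = (∫ θ, A θ ∂(gibbsMeasure prior lam A H u))
              + u * (LambdaFn prior lam A H u - B)
              + (1 / lam) * klDiv (gibbsMeasure prior lam A H u) prior} :=
  stmt5_general prior lam hlam A H hA hH CA CH hAbd hHbd B ubar hubar0 hcase1 hcase2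
end

section
/- Let (Y₀, Y₁, C₀, C₁, X) be distributed according to Q, with δ_y(x) = E[Y₁−Y₀|X=x] and δ_c(x) = E[C₁−C₀|X=x] integrable, and suppose B > E[δ_c(X)·1{δ_c(X)<0}]. Then there exist η_B ≥ 0 and a₁, a₂ ∈ [0,1] such that the stochastic rule f*_B(x) equal to 1 if δ_y(x) > η_B δ_c(x), equal to 0 if δ_y(x) < η_B δ_c(x), and equal to a₁·1{δ_c(x)>0} + a₂·1{δ_c(x)<0} if δ_y(x) = η_B δ_c(x), maximizes W(f) = E[δ_y(X) f(X)] over all measurable f: 𝒳 → [0,1] subject to E[δ_c(X) f(X)] ≤ B. Moreover if E[δ_c(X)·1{δ_y(X)>0}] ≤ B one may take η_B = a₁ = a₂ = 0, and otherwise (η_B, a₁, a₂) may be chosen so that E[δ_c(X) f*_B(X)] = B. -/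
open MeasureTheory

/-- The candidate optimal budget-constrained stochastic treatment rule:
`1` if `δy(x) > η δc(x)`, `0` if `δy(x) < η δc(x)`, and
`a₁·1{δc(x)>0} + a₂·1{δc(x)<0}` on the tie set. -/
noncomputable def fstarRule {𝓧 : Type*} (δy δc : 𝓧 → ℝ) (η a₁ a₂ : ℝ) (x : 𝓧) : ℝ :=
  if η * δc x < δy x then 1
  else if δy x < η * δc x then 0
  else a₁ * (if 0 < δc x then 1 else 0) + a₂ * (if δc x < 0 then 1 else 0)

set_option linter.unusedSectionVars false

open Filter

namespace Stmt6Aux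

variable {𝓧 : Type*} [MeasurableSpace 𝓧] {μ : Measure 𝓧} {δy δc : 𝓧 → ℝ}

/-- upper cost integrand -/
noncomputable def Gi (δy δc : 𝓧 → ℝ) (η : ℝ) (x : 𝓧) : ℝ :=
  (if 0 < δc x ∧ η * δc x ≤ δy x then δc x else 0) +
  (if δc x < 0 ∧ η * δc x < δy x then δc x else 0)

/-- lower cost integrand -/
noncomputable def gi (δy δc : 𝓧 → ℝ) (η : ℝ) (x : 𝓧) : ℝ :=
  (if 0 < δc x ∧ η * δc x < δy x then δc x else 0) +
  (if δc x < 0 ∧ η * δc x ≤ δy x then δc x else 0)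

lemma fstar_mem {η a₁ a₂ : ℝ} (h1 : a₁ ∈ Set.Icc (0:ℝ) 1) (h2 : a₂ ∈ Set.Icc (0:ℝ) 1)
    (x : 𝓧) : fstarRule δy δc η a₁ a₂ x ∈ Set.Icc (0:ℝ) 1 := by
  obtain ⟨h1a, h1b⟩ := h1; obtain ⟨h2a, h2b⟩ := h2
  unfold fstarRule
  split_ifs with hlt hgt hp hn hn <;> constructor <;> simp_all <;> linarith

lemma gi_le_Gi (η : ℝ) (x : 𝓧) : gi δy δc η x ≤ Gi δy δc η x := by
  unfold gi Gi
  split_ifs <;> simp_all <;> linarith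

lemma Gi_le_gi {η η' : ℝ} (h : η < η') (x : 𝓧) : Gi δy δc η' x ≤ gi δy δc η x := by
  unfold gi Gi
  apply add_le_add
  · split_ifs with hA hB hB
    · exact le_rfl
    · exact absurd ⟨hA.1, (mul_lt_mul_of_pos_right h hA.1).trans_le hA.2⟩ hB
    · exact hB.1.le
    · exact le_rfl
  · split_ifs with hA hB hB
    · exact le_rfl
    · exact hA.1.le
    · exact absurd ⟨hB.1, (mul_lt_mul_of_neg_right h hB.1).trans_le hB.2⟩ hA
    · exact le_rfl

lemma abs_Gi_le (η : ℝ) (x : 𝓧) : |Gi δy δc η x| ≤ |δc x| := by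
  unfold Gi
  split_ifs with h1 h2 h2
  · exact absurd h2.1 (asymm h1.1)
  · simp
  · simp
  · simpa using abs_nonneg _

lemma abs_gi_le (η : ℝ) (x : 𝓧) : |gi δy δc η x| ≤ |δc x| := by
  unfold gi
  split_ifs with h1 h2 h2
  · exact absurd h2.1 (asymm h1.1)
  · simp
  · simp
  · simpa using abs_nonneg _

lemma fstar_meas (hym : Measurable δy) (hcm : Measurable δc) (η a₁ a₂ : ℝ) :
    Measurable (fstarRule δy δc η a₁ a₂) := by
  unfold fstarRule
  apply Measurable.ite (measurableSet_lt (hcm.const_mul η) hym) measurable_const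
  apply Measurable.ite (measurableSet_lt hym (hcm.const_mul η)) measurable_const
  exact ((measurable_const.ite (measurableSet_lt measurable_const hcm)
      measurable_const).const_mul a₁).add
    ((measurable_const.ite (measurableSet_lt hcm measurable_const)
      measurable_const).const_mul a₂)

lemma integrable_piece (hc : Integrable δc μ) {p : 𝓧 → Prop} [DecidablePred p]
    (hp : MeasurableSet {x | p x}) :
    Integrable (fun x => if p x then δc x else 0) μ := by
  have : (fun x => if p x then δc x else 0) = Set.indicator {x | p x} δc := by
    ext x
    by_cases h : p x <;> simp [Set.indicator_apply, h]
  rw [this]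
  exact hc.indicator hp

lemma integrable_mul_bdd {g f : 𝓧 → ℝ} (hg : Integrable g μ)
    (hgm : Measurable g) (hfm : Measurable f) (hf : ∀ x, f x ∈ Set.Icc (0:ℝ) 1) :
    Integrable (fun x => g x * f x) μ := by
  refine hg.abs.mono' ((hgm.mul hfm).aestronglyMeasurable) ?_
  filter_upwards with x
  have h0 := (hf x).1
  have h1 := (hf x).2
  rw [Real.norm_eq_abs, abs_mul]
  calc |g x| * |f x| ≤ |g x| * 1 := by
        apply mul_le_mul_of_nonneg_left _ (abs_nonneg _)
        rw [abs_le]; constructor <;> linarith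
    _ = |g x| := mul_one _

lemma measurableSet_pos (hcm : Measurable δc) (hym : Measurable δy) (η : ℝ) :
    MeasurableSet {x | 0 < δc x ∧ η * δc x ≤ δy x} :=
  (measurableSet_lt measurable_const hcm).inter (measurableSet_le (hcm.const_mul η) hym)

lemma integrable_Gi (hym : Measurable δy) (hcm : Measurable δc) (hc : Integrable δc μ)
    (η : ℝ) : Integrable (fun x => Gi δy δc η x) μ := by
  unfold Gi
  exact (integrable_piece (p := fun x => 0 < δc x ∧ η * δc x ≤ δy x) hc
      ((measurableSet_lt measurable_const hcm).inter
        (measurableSet_le (hcm.const_mul η) hym))).add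
    (integrable_piece (p := fun x => δc x < 0 ∧ η * δc x < δy x) hc
      ((measurableSet_lt hcm measurable_const).inter
        (measurableSet_lt (hcm.const_mul η) hym)))

lemma integrable_gi (hym : Measurable δy) (hcm : Measurable δc) (hc : Integrable δc μ)
    (η : ℝ) : Integrable (fun x => gi δy δc η x) μ := by
  unfold gi
  exact (integrable_piece (p := fun x => 0 < δc x ∧ η * δc x < δy x) hc
      ((measurableSet_lt measurable_const hcm).inter
        (measurableSet_lt (hcm.const_mul η) hym))).add
    (integrable_piece (p := fun x => δc x < 0 ∧ η * δc x ≤ δy x) hc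
      ((measurableSet_lt hcm measurable_const).inter
        (measurableSet_le (hcm.const_mul η) hym)))

lemma Gi_of_pos {x : 𝓧} (h : 0 < δc x) (t : ℝ) :
    Gi δy δc t x = if t * δc x ≤ δy x then δc x else 0 := by
  unfold Gi
  rw [if_neg (show ¬(δc x < 0 ∧ t * δc x < δy x) from fun hh => absurd hh.1 (asymm h)),
    add_zero]
  by_cases h2 : t * δc x ≤ δy x
  · rw [if_pos ⟨h, h2⟩, if_pos h2]
  · rw [if_neg (fun hh => absurd hh.2 h2), if_neg h2]

lemma Gi_of_neg {x : 𝓧} (h : δc x < 0) (t : ℝ) :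
    Gi δy δc t x = if t * δc x < δy x then δc x else 0 := by
  unfold Gi
  rw [if_neg (show ¬(0 < δc x ∧ t * δc x ≤ δy x) from fun hh => absurd hh.1 (asymm h)),
    zero_add]
  by_cases h2 : t * δc x < δy x
  · rw [if_pos ⟨h, h2⟩, if_pos h2]
  · rw [if_neg (fun hh => absurd hh.2 h2), if_neg h2]

lemma Gi_of_zero {x : 𝓧} (h : δc x = 0) (t : ℝ) : Gi δy δc t x = 0 := by
  unfold Gi
  rw [if_neg (show ¬(0 < δc x ∧ t * δc x ≤ δy x) from
      fun hh => absurd hh.1 (by rw [h]; exact lt_irrefl 0)),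
    if_neg (show ¬(δc x < 0 ∧ t * δc x < δy x) from
      fun hh => absurd hh.1 (by rw [h]; exact lt_irrefl 0)), add_zero]

lemma gi_of_pos {x : 𝓧} (h : 0 < δc x) (t : ℝ) :
    gi δy δc t x = if t * δc x < δy x then δc x else 0 := by
  unfold gi
  rw [if_neg (show ¬(δc x < 0 ∧ t * δc x ≤ δy x) from fun hh => absurd hh.1 (asymm h)),
    add_zero]
  by_cases h2 : t * δc x < δy x
  · rw [if_pos ⟨h, h2⟩, if_pos h2]
  · rw [if_neg (fun hh => absurd hh.2 h2), if_neg h2]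

lemma gi_of_neg {x : 𝓧} (h : δc x < 0) (t : ℝ) :
    gi δy δc t x = if t * δc x ≤ δy x then δc x else 0 := by
  unfold gi
  rw [if_neg (show ¬(0 < δc x ∧ t * δc x < δy x) from fun hh => absurd hh.1 (asymm h)),
    zero_add]
  by_cases h2 : t * δc x ≤ δy x
  · rw [if_pos ⟨h, h2⟩, if_pos h2]
  · rw [if_neg (fun hh => absurd hh.2 h2), if_neg h2]

lemma gi_of_zero {x : 𝓧} (h : δc x = 0) (t : ℝ) : gi δy δc t x = 0 := by
  unfold gi
  rw [if_neg (show ¬(0 < δc x ∧ t * δc x < δy x) from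
      fun hh => absurd hh.1 (by rw [h]; exact lt_irrefl 0)),
    if_neg (show ¬(δc x < 0 ∧ t * δc x ≤ δy x) from
      fun hh => absurd hh.1 (by rw [h]; exact lt_irrefl 0)), add_zero]

lemma tendsto_Gi_pt (η : ℝ) (x : 𝓧) :
    Filter.Tendsto (fun t => Gi δy δc t x) (nhdsWithin η (Set.Ioi η))
      (nhds (gi δy δc η x)) := by
  refine Filter.Tendsto.congr' ?_ tendsto_const_nhds
  rcases lt_trichotomy (δc x) 0 with hc | hc | hc
  · rw [gi_of_neg hc]
    by_cases hle : η * δc x ≤ δy x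
    · rw [if_pos hle]
      filter_upwards [self_mem_nhdsWithin] with t ht
      rw [Gi_of_neg hc, if_pos ((mul_lt_mul_of_neg_right ht hc).trans_le hle)]
    · rw [if_neg hle]
      push_neg at hle
      have hδ : η < δy x / δc x := (lt_div_iff_of_neg hc).mpr hle
      filter_upwards [Ioo_mem_nhdsGT_of_mem ⟨le_refl η, hδ⟩] with t ht
      rw [Gi_of_neg hc, if_neg (asymm ((lt_div_iff_of_neg hc).mp ht.2))]
  · filter_upwards with t
    rw [Gi_of_zero hc, gi_of_zero hc]
  · rw [gi_of_pos hc]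
    by_cases hlt : η * δc x < δy x
    · rw [if_pos hlt]
      have hδ : η < δy x / δc x := (lt_div_iff₀ hc).mpr hlt
      filter_upwards [Ioo_mem_nhdsGT_of_mem ⟨le_refl η, hδ⟩] with t ht
      rw [Gi_of_pos hc, if_pos ((lt_div_iff₀ hc).mp ht.2).le]
    · rw [if_neg hlt]
      push_neg at hlt
      filter_upwards [self_mem_nhdsWithin] with t ht
      rw [Gi_of_pos hc,
        if_neg (not_le.mpr (hlt.trans_lt (mul_lt_mul_of_pos_right ht hc)))]

lemma tendsto_gi_pt (η : ℝ) (x : 𝓧) :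
    Filter.Tendsto (fun t => gi δy δc t x) (nhdsWithin η (Set.Iio η))
      (nhds (Gi δy δc η x)) := by
  refine Filter.Tendsto.congr' ?_ tendsto_const_nhds
  rcases lt_trichotomy (δc x) 0 with hc | hc | hc
  · rw [Gi_of_neg hc]
    by_cases hlt : η * δc x < δy x
    · rw [if_pos hlt]
      have hδ : δy x / δc x < η := (div_lt_iff_of_neg hc).mpr hlt
      filter_upwards [Ioo_mem_nhdsLT_of_mem ⟨hδ, le_refl η⟩] with t ht
      rw [gi_of_neg hc, if_pos ((div_lt_iff_of_neg hc).mp ht.1).le]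
    · rw [if_neg hlt]
      push_neg at hlt
      filter_upwards [self_mem_nhdsWithin] with t ht
      rw [gi_of_neg hc,
        if_neg (not_le.mpr (hlt.trans_lt (mul_lt_mul_of_neg_right ht hc)))]
  · filter_upwards with t
    rw [Gi_of_zero hc, gi_of_zero hc]
  · rw [Gi_of_pos hc]
    by_cases hle : η * δc x ≤ δy x
    · rw [if_pos hle]
      filter_upwards [self_mem_nhdsWithin] with t ht
      rw [gi_of_pos hc, if_pos ((mul_lt_mul_of_pos_right ht hc).trans_le hle)]
    · rw [if_neg hle]
      push_neg at hle
      have hδ : δy x / δc x < η := (div_lt_iff₀ hc).mpr hle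
      filter_upwards [Ioo_mem_nhdsLT_of_mem ⟨hδ, le_refl η⟩] with t ht
      rw [gi_of_pos hc, if_neg (asymm ((div_lt_iff₀ hc).mp ht.1))]

lemma tendsto_gi_atTop_pt (x : 𝓧) :
    Filter.Tendsto (fun t => gi δy δc t x) Filter.atTop
      (nhds (if δc x < 0 then δc x else 0)) := by
  refine Filter.Tendsto.congr' ?_ tendsto_const_nhds
  rcases lt_trichotomy (δc x) 0 with hc | hc | hc
  · rw [if_pos hc]
    filter_upwards [Filter.eventually_ge_atTop (δy x / δc x)] with t ht
    rw [gi_of_neg hc, if_pos ((div_le_iff_of_neg hc).mp ht)]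
  · rw [if_neg (by rw [hc]; exact lt_irrefl 0)]
    filter_upwards with t
    rw [gi_of_zero hc]
  · rw [if_neg (asymm hc)]
    filter_upwards [Filter.eventually_ge_atTop (δy x / δc x)] with t ht
    rw [gi_of_pos hc, if_neg (not_lt.mpr ((div_le_iff₀ hc).mp ht))]

lemma measurable_Gi (hym : Measurable δy) (hcm : Measurable δc) (t : ℝ) :
    Measurable (fun x => Gi δy δc t x) := by
  unfold Gi
  exact (Measurable.ite ((measurableSet_lt measurable_const hcm).inter
      (measurableSet_le (hcm.const_mul t) hym)) hcm measurable_const).add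
    (Measurable.ite ((measurableSet_lt hcm measurable_const).inter
      (measurableSet_lt (hcm.const_mul t) hym)) hcm measurable_const)

lemma measurable_gi (hym : Measurable δy) (hcm : Measurable δc) (t : ℝ) :
    Measurable (fun x => gi δy δc t x) := by
  unfold gi
  exact (Measurable.ite ((measurableSet_lt measurable_const hcm).inter
      (measurableSet_lt (hcm.const_mul t) hym)) hcm measurable_const).add
    (Measurable.ite ((measurableSet_lt hcm measurable_const).inter
      (measurableSet_le (hcm.const_mul t) hym)) hcm measurable_const)

lemma tendsto_G_right (hym : Measurable δy) (hcm : Measurable δc)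
    (hc : Integrable δc μ) (η : ℝ) :
    Filter.Tendsto (fun t => ∫ x, Gi δy δc t x ∂μ) (nhdsWithin η (Set.Ioi η))
      (nhds (∫ x, gi δy δc η x ∂μ)) := by
  apply tendsto_integral_filter_of_dominated_convergence (fun x => |δc x|)
  · filter_upwards with t
    exact (measurable_Gi hym hcm t).aestronglyMeasurable
  · filter_upwards with t
    filter_upwards with x
    rw [Real.norm_eq_abs]
    exact abs_Gi_le t x
  · exact hc.abs
  · filter_upwards with x
    exact tendsto_Gi_pt η x

lemma tendsto_g_left (hym : Measurable δy) (hcm : Measurable δc)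
    (hc : Integrable δc μ) (η : ℝ) :
    Filter.Tendsto (fun t => ∫ x, gi δy δc t x ∂μ) (nhdsWithin η (Set.Iio η))
      (nhds (∫ x, Gi δy δc η x ∂μ)) := by
  apply tendsto_integral_filter_of_dominated_convergence (fun x => |δc x|)
  · filter_upwards with t
    exact (measurable_gi hym hcm t).aestronglyMeasurable
  · filter_upwards with t
    filter_upwards with x
    rw [Real.norm_eq_abs]
    exact abs_gi_le t x
  · exact hc.abs
  · filter_upwards with x
    exact tendsto_gi_pt η x

lemma tendsto_g_atTop (hym : Measurable δy) (hcm : Measurable δc)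
    (hc : Integrable δc μ) :
    Filter.Tendsto (fun t => ∫ x, gi δy δc t x ∂μ) Filter.atTop
      (nhds (∫ x, (if δc x < 0 then δc x else 0) ∂μ)) := by
  apply tendsto_integral_filter_of_dominated_convergence (fun x => |δc x|)
  · filter_upwards with t
    exact (measurable_gi hym hcm t).aestronglyMeasurable
  · filter_upwards with t
    filter_upwards with x
    rw [Real.norm_eq_abs]
    exact abs_gi_le t x
  · exact hc.abs
  · filter_upwards with x
    exact tendsto_gi_atTop_pt x

lemma intG_le_intg (hym : Measurable δy) (hcm : Measurable δc) (hc : Integrable δc μ)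
    {η η' : ℝ} (h : η < η') :
    (∫ x, Gi δy δc η' x ∂μ) ≤ ∫ x, gi δy δc η x ∂μ :=
  integral_mono (integrable_Gi hym hcm hc η') (integrable_gi hym hcm hc η)
    (Gi_le_gi h)

lemma intg_le_intG (hym : Measurable δy) (hcm : Measurable δc) (hc : Integrable δc μ)
    (η : ℝ) :
    (∫ x, gi δy δc η x ∂μ) ≤ ∫ x, Gi δy δc η x ∂μ :=
  integral_mono (integrable_gi hym hcm hc η) (integrable_Gi hym hcm hc η)
    (gi_le_Gi η)

lemma cost_decomp (η a₁ a₂ : ℝ) (x : 𝓧) :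
    δc x * fstarRule δy δc η a₁ a₂ x =
      (if η * δc x < δy x then δc x else 0)
      + a₁ * (if δy x = η * δc x ∧ 0 < δc x then δc x else 0)
      + a₂ * (if δy x = η * δc x ∧ δc x < 0 then δc x else 0) := by
  unfold fstarRule
  by_cases h1 : η * δc x < δy x
  · rw [if_pos h1, if_pos h1, mul_one,
      if_neg (fun hh : _ ∧ _ => absurd hh.1 h1.ne'),
      if_neg (fun hh : _ ∧ _ => absurd hh.1 h1.ne'), mul_zero, mul_zero, add_zero,
      add_zero]
  · by_cases h2 : δy x < η * δc x
    · rw [if_neg h1, if_pos h2, mul_zero, if_neg h1,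
        if_neg (fun hh : _ ∧ _ => absurd hh.1 h2.ne),
        if_neg (fun hh : _ ∧ _ => absurd hh.1 h2.ne), mul_zero, mul_zero, add_zero,
        add_zero]
    · have heq : δy x = η * δc x := le_antisymm (not_lt.mp h1) (not_lt.mp h2)
      rw [if_neg h1, if_neg h2, if_neg h1]
      split_ifs <;> (try (exfalso; linarith)) <;> (try (exfalso; tauto)) <;> ring

lemma Gi_eq_pt (η : ℝ) (x : 𝓧) :
    Gi δy δc η x = (if η * δc x < δy x then δc x else 0)
      + (if δy x = η * δc x ∧ 0 < δc x then δc x else 0) := by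
  rcases lt_trichotomy (δc x) 0 with hc | hc | hc
  · rw [Gi_of_neg hc, if_neg (fun hh : _ ∧ _ => absurd hh.2 (asymm hc)), add_zero]
  · rw [Gi_of_zero hc, if_neg (fun hh : _ ∧ _ => absurd (hc ▸ hh.2) (lt_irrefl _)),
      add_zero, hc]
    split_ifs <;> rfl
  · rw [Gi_of_pos hc]
    rcases lt_trichotomy (η * δc x) (δy x) with h1 | h1 | h1
    · rw [if_pos h1.le, if_pos h1, if_neg (fun hh : _ ∧ _ => absurd hh.1 h1.ne'),
        add_zero]
    · rw [if_pos h1.le, if_neg (fun hh => absurd h1 hh.ne), if_pos ⟨h1.symm, hc⟩,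
        zero_add]
    · rw [if_neg (not_le.mpr h1), if_neg (fun hh => absurd h1 (not_lt.mpr hh.le)),
        if_neg (fun hh : _ ∧ _ => absurd hh.1 h1.ne), add_zero]

lemma gi_eq_pt (η : ℝ) (x : 𝓧) :
    gi δy δc η x = (if η * δc x < δy x then δc x else 0)
      + (if δy x = η * δc x ∧ δc x < 0 then δc x else 0) := by
  rcases lt_trichotomy (δc x) 0 with hc | hc | hc
  · rw [gi_of_neg hc]
    rcases lt_trichotomy (η * δc x) (δy x) with h1 | h1 | h1
    · rw [if_pos h1.le, if_pos h1, if_neg (fun hh : _ ∧ _ => absurd hh.1 h1.ne'),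
        add_zero]
    · rw [if_pos h1.le, if_neg (fun hh => absurd h1 hh.ne), if_pos ⟨h1.symm, hc⟩,
        zero_add]
    · rw [if_neg (not_le.mpr h1), if_neg (fun hh => absurd h1 (not_lt.mpr hh.le)),
        if_neg (fun hh : _ ∧ _ => absurd hh.1 h1.ne), add_zero]
  · rw [gi_of_zero hc, if_neg (fun hh : _ ∧ _ => absurd (hc ▸ hh.2) (lt_irrefl _)),
      add_zero, hc]
    split_ifs <;> rfl
  · rw [gi_of_pos hc, if_neg (fun hh : _ ∧ _ => absurd hh.2 (asymm hc)), add_zero]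

lemma welfare_pt {η a₁ a₂ : ℝ} (f : 𝓧 → ℝ) (hf : ∀ x, f x ∈ Set.Icc (0:ℝ) 1)
    (x : 𝓧) :
    (δy x - η * δc x) * f x ≤ (δy x - η * δc x) * fstarRule δy δc η a₁ a₂ x := by
  unfold fstarRule
  by_cases hlt : η * δc x < δy x
  · rw [if_pos hlt, mul_one]
    nlinarith [(hf x).2, sub_pos.mpr hlt]
  · by_cases hgt : δy x < η * δc x
    · rw [if_neg hlt, if_pos hgt, mul_zero]
      exact mul_nonpos_of_nonpos_of_nonneg (by linarith) (hf x).1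
    · have heq : δy x - η * δc x = 0 := by
        have := not_lt.mp hlt
        have := not_lt.mp hgt
        linarith
      rw [heq, zero_mul, zero_mul]

lemma fstar_zero_cost (x : 𝓧) :
    δc x * fstarRule δy δc 0 0 0 x = if 0 < δy x then δc x else 0 := by
  unfold fstarRule
  simp only [zero_mul]
  by_cases h1 : 0 < δy x
  · rw [if_pos h1, if_pos h1, mul_one]
  · rw [if_neg h1, if_neg h1]
    split_ifs <;> ring

lemma welfare_zero_pt (f : 𝓧 → ℝ) (hf : ∀ x, f x ∈ Set.Icc (0:ℝ) 1) (x : 𝓧) :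
    δy x * f x ≤ δy x * fstarRule δy δc 0 0 0 x := by
  unfold fstarRule
  simp only [zero_mul]
  by_cases h1 : 0 < δy x
  · rw [if_pos h1, mul_one]
    nlinarith [(hf x).2, h1]
  · rw [if_neg h1]
    have h0 : δy x ≤ 0 := not_lt.mp h1
    split_ifs with h2
    · rw [mul_zero]
      exact mul_nonpos_of_nonpos_of_nonneg h0 (hf x).1
    · have : δy x = 0 := le_antisymm h0 (not_lt.mp h2)
      rw [this, zero_mul, zero_mul]

lemma indicator_le_Gi0 (x : 𝓧) :
    (if 0 < δy x then δc x else 0) ≤ Gi δy δc 0 x := by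
  rcases lt_trichotomy (δc x) 0 with hc | hc | hc
  · rw [Gi_of_neg hc, zero_mul]
  · rw [Gi_of_zero hc, hc]
    split_ifs <;> exact le_rfl
  · rw [Gi_of_pos hc, zero_mul]
    split_ifs with h1 h2 h2
    · exact le_rfl
    · exact absurd h1.le h2
    · exact hc.le
    · exact le_rfl

end Stmt6Aux

open Stmt6Aux

/-- existence of an optimal budget-constrained treatment rule of threshold form.
Here `μ` is the distribution of `X`, `δy`/`δc` the conditional average treatment
effect/cost, and `B` a budget with `B > E[δc·1{δc<0}]`.  There exist `η ≥ 0` and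
`a₁, a₂ ∈ [0,1]` such that `fstarRule` satisfies the budget constraint and maximizes
`E[δy·f]` over measurable `f : 𝓧 → [0,1]` with `E[δc·f] ≤ B`; moreover if
`E[δc·1{δy>0}] ≤ B` one may take `η = a₁ = a₂ = 0`, and otherwise the parameters may be
chosen so the budget binds exactly. -/
theorem stmt6 {𝓧 : Type*} [MeasurableSpace 𝓧] (μ : Measure 𝓧) [IsProbabilityMeasure μ]
    (δy δc : 𝓧 → ℝ) (hym : Measurable δy) (hcm : Measurable δc)
    (hy : Integrable δy μ) (hc : Integrable δc μ)
    (B : ℝ) (hB : (∫ x, (if δc x < 0 then δc x else 0) ∂μ) < B) :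
    ∃ η a₁ a₂ : ℝ, 0 ≤ η ∧ a₁ ∈ Set.Icc (0:ℝ) 1 ∧ a₂ ∈ Set.Icc (0:ℝ) 1 ∧
      (∫ x, δc x * fstarRule δy δc η a₁ a₂ x ∂μ) ≤ B ∧
      (∀ f : 𝓧 → ℝ, Measurable f → (∀ x, f x ∈ Set.Icc (0:ℝ) 1) →
        (∫ x, δc x * f x ∂μ) ≤ B →
        (∫ x, δy x * f x ∂μ) ≤ ∫ x, δy x * fstarRule δy δc η a₁ a₂ x ∂μ) ∧
      ((∫ x, (if 0 < δy x then δc x else 0) ∂μ) ≤ B → η = 0 ∧ a₁ = 0 ∧ a₂ = 0) ∧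
      (B < (∫ x, (if 0 < δy x then δc x else 0) ∂μ) →
        (∫ x, δc x * fstarRule δy δc η a₁ a₂ x ∂μ) = B) := by
  classical
  have h01 : (0:ℝ) ∈ Set.Icc (0:ℝ) 1 := ⟨le_refl 0, zero_le_one⟩
  by_cases hcase : (∫ x, (if 0 < δy x then δc x else 0) ∂μ) ≤ B
  · refine ⟨0, 0, 0, le_refl 0, h01, h01, ?_, ?_, fun _ => ⟨rfl, rfl, rfl⟩,
      fun hlt => absurd hcase (not_le.mpr hlt)⟩
    · have heq : (∫ x, δc x * fstarRule δy δc 0 0 0 x ∂μ)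
          = ∫ x, (if 0 < δy x then δc x else 0) ∂μ :=
        integral_congr_ae (Filter.Eventually.of_forall fun x => fstar_zero_cost x)
      rw [heq]
      exact hcase
    · intro f hfm hf _
      exact integral_mono (integrable_mul_bdd hy hym hfm hf)
        (integrable_mul_bdd hy hym (fstar_meas hym hcm 0 0 0) (fstar_mem h01 h01))
        (welfare_zero_pt f hf)
  · push_neg at hcase
    -- the set of feasible thresholds
    set S : Set ℝ := {t : ℝ | 0 ≤ t ∧ (∫ x, gi δy δc t x ∂μ) ≤ B} with hSdef
    have hev : ∀ᶠ t in Filter.atTop, (∫ x, gi δy δc t x ∂μ) < B :=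
      (tendsto_g_atTop hym hcm hc).eventually_lt_const hB
    obtain ⟨t₀, ht₀⟩ := (hev.and (Filter.eventually_ge_atTop 0)).exists
    have hne : S.Nonempty := ⟨t₀, ht₀.2, ht₀.1.le⟩
    have hbdd : BddBelow S := ⟨0, fun s hs => hs.1⟩
    set η := sInf S with hηdef
    have hη0 : 0 ≤ η := le_csInf hne fun s hs => hs.1
    have hgB : (∫ x, gi δy δc η x ∂μ) ≤ B := by
      refine le_of_tendsto (tendsto_G_right hym hcm hc η) ?_
      filter_upwards [self_mem_nhdsWithin] with t ht
      obtain ⟨s, hsS, hst⟩ := exists_lt_of_csInf_lt hne ht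
      exact (intG_le_intg hym hcm hc hst).trans hsS.2
    have hBG : B ≤ (∫ x, Gi δy δc η x ∂μ) := by
      rcases eq_or_lt_of_le hη0 with h0 | h0
      · have hle : (∫ x, (if 0 < δy x then δc x else 0) ∂μ)
            ≤ ∫ x, Gi δy δc 0 x ∂μ := by
          refine integral_mono ?_ (integrable_Gi hym hcm hc 0)
            (fun x => indicator_le_Gi0 x)
          exact integrable_piece (p := fun x => 0 < δy x) hc
            (measurableSet_lt measurable_const hym)
        rw [← h0]
        exact hcase.le.trans hle
      · refine ge_of_tendsto (tendsto_g_left hym hcm hc η) ?_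
        filter_upwards [Ioo_mem_nhdsLT_of_mem ⟨h0, le_refl η⟩] with t ht
        have htS : t ∉ S := fun hts => absurd (csInf_le hbdd hts) (not_le.mpr ht.2)
        by_contra hcon
        push_neg at hcon
        exact htS ⟨ht.1.le, hcon.le⟩
    -- decomposition of the cost at η
    set K₀ : ℝ := ∫ x, (if η * δc x < δy x then δc x else 0) ∂μ with hK₀def
    set P : ℝ := ∫ x, (if δy x = η * δc x ∧ 0 < δc x then δc x else 0) ∂μ with hPdef
    set N : ℝ := ∫ x, (if δy x = η * δc x ∧ δc x < 0 then δc x else 0) ∂μ with hNdef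
    have int_base : Integrable (fun x => if η * δc x < δy x then δc x else 0) μ :=
      integrable_piece (p := fun x => η * δc x < δy x) hc
        (measurableSet_lt (hcm.const_mul η) hym)
    have int_P : Integrable
        (fun x => if δy x = η * δc x ∧ 0 < δc x then δc x else 0) μ :=
      integrable_piece (p := fun x => δy x = η * δc x ∧ 0 < δc x) hc
        ((measurableSet_eq_fun hym (hcm.const_mul η)).inter
          (measurableSet_lt measurable_const hcm))
    have int_N : Integrable
        (fun x => if δy x = η * δc x ∧ δc x < 0 then δc x else 0) μ :=
      integrable_piece (p := fun x => δy x = η * δc x ∧ δc x < 0) hc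
        ((measurableSet_eq_fun hym (hcm.const_mul η)).inter
          (measurableSet_lt hcm measurable_const))
    have hPnn : 0 ≤ P := by
      refine integral_nonneg fun x => ?_
      simp only [Pi.zero_apply]
      by_cases h : δy x = η * δc x ∧ 0 < δc x
      · rw [if_pos h]; exact h.2.le
      · rw [if_neg h]
    have hNnp : N ≤ 0 := by
      refine integral_nonpos fun x => ?_
      simp only [Pi.zero_apply]
      by_cases h : δy x = η * δc x ∧ δc x < 0
      · rw [if_pos h]; exact h.2.le
      · rw [if_neg h]
    have int_bP : Integrable (fun x => (if η * δc x < δy x then δc x else 0)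
        + (if δy x = η * δc x ∧ 0 < δc x then δc x else 0)) μ := int_base.add int_P
    have int_bN : Integrable (fun x => (if η * δc x < δy x then δc x else 0)
        + (if δy x = η * δc x ∧ δc x < 0 then δc x else 0)) μ := int_base.add int_N
    have hGP : (∫ x, Gi δy δc η x ∂μ) = K₀ + P := by
      have e : (∫ x, Gi δy δc η x ∂μ)
          = ∫ x, ((if η * δc x < δy x then δc x else 0)
            + (if δy x = η * δc x ∧ 0 < δc x then δc x else 0)) ∂μ :=
        integral_congr_ae (Filter.Eventually.of_forall fun x => Gi_eq_pt η x)
      rw [e, integral_add int_base int_P]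
    have hgN : (∫ x, gi δy δc η x ∂μ) = K₀ + N := by
      have e : (∫ x, gi δy δc η x ∂μ)
          = ∫ x, ((if η * δc x < δy x then δc x else 0)
            + (if δy x = η * δc x ∧ δc x < 0 then δc x else 0)) ∂μ :=
        integral_congr_ae (Filter.Eventually.of_forall fun x => gi_eq_pt η x)
      rw [e, integral_add int_base int_N]
    have hcost : ∀ a₁ a₂ : ℝ,
        (∫ x, δc x * fstarRule δy δc η a₁ a₂ x ∂μ) = K₀ + a₁ * P + a₂ * N := by
      intro a₁ a₂
      have e : (∫ x, δc x * fstarRule δy δc η a₁ a₂ x ∂μ)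
          = ∫ x, ((if η * δc x < δy x then δc x else 0)
            + a₁ * (if δy x = η * δc x ∧ 0 < δc x then δc x else 0))
            + a₂ * (if δy x = η * δc x ∧ δc x < 0 then δc x else 0) ∂μ :=
        integral_congr_ae (Filter.Eventually.of_forall fun x => cost_decomp η a₁ a₂ x)
      have int_aP : Integrable
          (fun x => a₁ * (if δy x = η * δc x ∧ 0 < δc x then δc x else 0)) μ :=
        int_P.const_mul a₁
      have int_aN : Integrable
          (fun x => a₂ * (if δy x = η * δc x ∧ δc x < 0 then δc x else 0)) μ :=
        int_N.const_mul a₂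
      have int_baP : Integrable (fun x => (if η * δc x < δy x then δc x else 0)
          + a₁ * (if δy x = η * δc x ∧ 0 < δc x then δc x else 0)) μ :=
        int_base.add int_aP
      rw [e, integral_add int_baP int_aN, integral_add int_base int_aP,
        integral_const_mul, integral_const_mul]
    -- choose a₁, a₂ so that the budget binds
    have hchoice : ∃ a₁ a₂ : ℝ, a₁ ∈ Set.Icc (0:ℝ) 1 ∧ a₂ ∈ Set.Icc (0:ℝ) 1 ∧
        K₀ + a₁ * P + a₂ * N = B := by
      by_cases hK : K₀ ≤ B
      · by_cases hP : P = 0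
        · refine ⟨0, 0, h01, h01, ?_⟩
          have h1 : B ≤ K₀ + P := by rw [← hGP]; exact hBG
          have h2 : K₀ + 0 * P + 0 * N = K₀ := by ring
          rw [h2]
          linarith
        · have hPpos : 0 < P := lt_of_le_of_ne hPnn (Ne.symm hP)
          refine ⟨(B - K₀) / P, 0, ⟨div_nonneg (by linarith) hPnn, ?_⟩, h01, ?_⟩
          · rw [div_le_one hPpos]
            have h1 : B ≤ K₀ + P := by rw [← hGP]; exact hBG
            linarith
          · rw [div_mul_cancel₀ _ hP]
            ring
      · push_neg at hK
        have hgn : K₀ + N ≤ B := by rw [← hgN]; exact hgB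
        have hNneg : N < 0 := by linarith
        refine ⟨0, (B - K₀) / N, h01, ⟨?_, ?_⟩, ?_⟩
        · rw [le_div_iff_of_neg hNneg]
          nlinarith
        · rw [div_le_iff_of_neg hNneg, one_mul]
          linarith
        · rw [div_mul_cancel₀ _ hNneg.ne]
          ring
    obtain ⟨a₁, a₂, ha₁, ha₂, hab⟩ := hchoice
    have hcostB : (∫ x, δc x * fstarRule δy δc η a₁ a₂ x ∂μ) = B := by
      rw [hcost a₁ a₂, hab]
    refine ⟨η, a₁, a₂, hη0, ha₁, ha₂, hcostB.le, ?_, ?_, fun _ => hcostB⟩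
    · intro f hfm hf hfB
      have hfsm := fstar_meas hym hcm η a₁ a₂ (δy := δy) (δc := δc)
      have hfsmem := fstar_mem (δy := δy) (δc := δc) (η := η) ha₁ ha₂
      have key : ∀ x, (δy x - η * δc x) * f x
          ≤ (δy x - η * δc x) * fstarRule δy δc η a₁ a₂ x := welfare_pt f hf
      have hyc : Integrable (fun x => δy x - η * δc x) μ := hy.sub (hc.const_mul η)
      have hycm : Measurable (fun x => δy x - η * δc x) :=
        hym.sub (hcm.const_mul η)
      have hmono := integral_mono
        (integrable_mul_bdd (g := fun x => δy x - η * δc x) hyc hycm hfm hf)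
        (integrable_mul_bdd (g := fun x => δy x - η * δc x) hyc hycm hfsm hfsmem)
        key
      have expand : ∀ g : 𝓧 → ℝ, Measurable g → (∀ x, g x ∈ Set.Icc (0:ℝ) 1) →
          (∫ x, (δy x - η * δc x) * g x ∂μ)
            = (∫ x, δy x * g x ∂μ) - η * ∫ x, δc x * g x ∂μ := by
        intro g hgm hg
        have e1 : (fun x => (δy x - η * δc x) * g x)
            = fun x => δy x * g x - η * (δc x * g x) := funext fun x => by ring
        have intcg : Integrable (fun x => η * (δc x * g x)) μ :=
          (integrable_mul_bdd hc hcm hgm hg).const_mul η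
        rw [e1, integral_sub (integrable_mul_bdd hy hym hgm hg) intcg,
          integral_const_mul]
      rw [expand f hfm hf, expand _ hfsm hfsmem, hcostB] at hmono
      have hηf : η * (∫ x, δc x * f x ∂μ) ≤ η * B :=
        mul_le_mul_of_nonneg_left hfB hη0
      linarith
    · intro hle
      exact absurd hle (not_le.mpr hcase)
end

section
/- In the budget-constrained treatment setting, if additionally Q(δ_y(X) = η_B δ_c(X)) = 0, then the optimal budget-constrained rule f*_B(x) = 1{δ_y(x) > η_B δ_c(x)} is deterministic and unique in the sense that any other f' maximizing welfare subject to cost ≤ B satisfies f'(X) = f*_B(X) almost surely under Q. -/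
open MeasureTheory

lemma stmt7_intmul {𝓧 : Type*} [MeasurableSpace 𝓧] (μ : Measure 𝓧)
    (δ f : 𝓧 → ℝ) (hδm : Measurable δ) (hδ : Integrable δ μ) (hfm : Measurable f)
    (hf : ∀ x, f x ∈ Set.Icc (0:ℝ) 1) : Integrable (fun x => δ x * f x) μ := by
  refine hδ.abs.mono' ((hδm.mul hfm).aestronglyMeasurable)
    (Filter.Eventually.of_forall fun x => ?_)
  have h0 := (hf x).1
  have h1 := (hf x).2
  rw [Real.norm_eq_abs, abs_mul]
  calc |δ x| * |f x| ≤ |δ x| * 1 := by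
        apply mul_le_mul_of_nonneg_left _ (abs_nonneg _)
        rw [abs_of_nonneg h0]; exact h1
    _ = |δ x| := mul_one _

lemma stmt7_fstar_meas {𝓧 : Type*} [MeasurableSpace 𝓧]
    (δy δc : 𝓧 → ℝ) (hym : Measurable δy) (hcm : Measurable δc) (η : ℝ) :
    Measurable (fun x => if η * δc x < δy x then (1:ℝ) else 0) :=
  Measurable.ite (measurableSet_lt (measurable_const.mul hcm) hym)
    measurable_const measurable_const

lemma stmt7_fstar_mem {𝓧 : Type*} (δy δc : 𝓧 → ℝ) (η : ℝ) (x : 𝓧) :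
    (if η * δc x < δy x then (1:ℝ) else 0) ∈ Set.Icc (0:ℝ) 1 := by
  split <;> simp

lemma stmt7_key {𝓧 : Type*} [MeasurableSpace 𝓧] (μ : Measure 𝓧)
    (δy δc : 𝓧 → ℝ) (hym : Measurable δy) (hcm : Measurable δc)
    (hy : Integrable δy μ) (hc : Integrable δc μ) (η : ℝ)
    (f : 𝓧 → ℝ) (hfm : Measurable f) (hf : ∀ x, f x ∈ Set.Icc (0:ℝ) 1) :
    (∫ x, (δy x - η * δc x) * ((if η * δc x < δy x then (1:ℝ) else 0) - f x) ∂μ)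
    = ((∫ x, δy x * (if η * δc x < δy x then (1:ℝ) else 0) ∂μ) - ∫ x, δy x * f x ∂μ)
      - η * ((∫ x, δc x * (if η * δc x < δy x then (1:ℝ) else 0) ∂μ) - ∫ x, δc x * f x ∂μ) := by
  have hys := stmt7_intmul μ δy (fun x => if η * δc x < δy x then (1:ℝ) else 0) hym hy
    (stmt7_fstar_meas δy δc hym hcm η) (stmt7_fstar_mem δy δc η)
  have hyf := stmt7_intmul μ δy f hym hy hfm hf
  have hcs := stmt7_intmul μ δc (fun x => if η * δc x < δy x then (1:ℝ) else 0) hcm hc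
    (stmt7_fstar_meas δy δc hym hcm η) (stmt7_fstar_mem δy δc η)
  have hcf := stmt7_intmul μ δc f hcm hc hfm hf
  have heq : (fun x => (δy x - η * δc x) * ((if η * δc x < δy x then (1:ℝ) else 0) - f x))
      = fun x => (δy x * (if η * δc x < δy x then (1:ℝ) else 0) - δy x * f x)
        - η * (δc x * (if η * δc x < δy x then (1:ℝ) else 0) - δc x * f x) := by
    funext x; ring
  have hA : Integrable (fun x => δy x * (if η * δc x < δy x then (1:ℝ) else 0) - δy x * f x) μ :=
    hys.sub hyf
  have hB' : Integrable (fun x => η * (δc x * (if η * δc x < δy x then (1:ℝ) else 0) - δc x * f x)) μ :=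
    (hcs.sub hcf).const_mul η
  rw [heq, integral_sub hA hB', integral_sub hys hyf, integral_const_mul, integral_sub hcs hcf]

lemma stmt7_nonneg {𝓧 : Type*} (δy δc : 𝓧 → ℝ) (η : ℝ)
    (f : 𝓧 → ℝ) (hf : ∀ x, f x ∈ Set.Icc (0:ℝ) 1) (x : 𝓧) :
    0 ≤ (δy x - η * δc x) * ((if η * δc x < δy x then (1:ℝ) else 0) - f x) := by
  by_cases h : η * δc x < δy x
  · simp only [h, if_pos]
    exact mul_nonneg (by linarith) (by linarith [(hf x).2])
  · simp only [h, if_neg, not_false_iff]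
    push_neg at h
    have : (δy x - η * δc x) ≤ 0 := by linarith
    have := (hf x).1
    nlinarith

/-- if the tie set `{δy = η_B δc}` has probability zero, then the deterministic
rule `f*_B(x) = 1{δy(x) > η_B δc(x)}` is optimal for the budget-constrained welfare problem
and unique: any other measurable `f' : 𝓧 → [0,1]` with cost `≤ B` attaining at least the
welfare of `f*_B` equals `f*_B` almost surely.  Here `η_B ≥ 0` is the optimal Lagrange
multiplier: either `η_B = 0` and `K(f*_B) ≤ B`, or `η_B > 0` and `K(f*_B) = B`. -/
theorem stmt7 {𝓧 : Type*} [MeasurableSpace 𝓧] (μ : Measure 𝓧) [IsProbabilityMeasure μ]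
    (δy δc : 𝓧 → ℝ) (hym : Measurable δy) (hcm : Measurable δc)
    (hy : Integrable δy μ) (hc : Integrable δc μ)
    (B η : ℝ) (hη : 0 ≤ η)
    (hB : (∫ x, (if δc x < 0 then δc x else 0) ∂μ) < B)
    (hcase :
      (η = 0 ∧ (∫ x, δc x * (if η * δc x < δy x then (1:ℝ) else 0) ∂μ) ≤ B) ∨
      (0 < η ∧ (∫ x, δc x * (if η * δc x < δy x then (1:ℝ) else 0) ∂μ) = B))
    (htie : μ {x | δy x = η * δc x} = 0) :
    (∀ f : 𝓧 → ℝ, Measurable f → (∀ x, f x ∈ Set.Icc (0:ℝ) 1) →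
      (∫ x, δc x * f x ∂μ) ≤ B →
      (∫ x, δy x * f x ∂μ) ≤ ∫ x, δy x * (if η * δc x < δy x then (1:ℝ) else 0) ∂μ) ∧
    (∀ f' : 𝓧 → ℝ, Measurable f' → (∀ x, f' x ∈ Set.Icc (0:ℝ) 1) →
      (∫ x, δc x * f' x ∂μ) ≤ B →
      (∫ x, δy x * (if η * δc x < δy x then (1:ℝ) else 0) ∂μ) ≤ (∫ x, δy x * f' x ∂μ) →
      f' =ᵐ[μ] fun x => if η * δc x < δy x then (1:ℝ) else 0) := by
  have hmult : ∀ f : 𝓧 → ℝ, Measurable f → (∀ x, f x ∈ Set.Icc (0:ℝ) 1) →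
      (∫ x, δc x * f x ∂μ) ≤ B →
      0 ≤ η * ((∫ x, δc x * (if η * δc x < δy x then (1:ℝ) else 0) ∂μ) - ∫ x, δc x * f x ∂μ) := by
    intro f hfm hf hKf
    rcases hcase with ⟨h0, _⟩ | ⟨h0, hKB⟩
    · simp [h0]
    · exact mul_nonneg (le_of_lt h0) (by rw [hKB]; linarith)
  constructor
  · intro f hfm hf hKf
    have hk := stmt7_key μ δy δc hym hcm hy hc η f hfm hf
    have h1 : 0 ≤ ∫ x, (δy x - η * δc x) * ((if η * δc x < δy x then (1:ℝ) else 0) - f x) ∂μ :=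
      integral_nonneg (stmt7_nonneg δy δc η f hf)
    have := hmult f hfm hf hKf
    linarith [hk ▸ h1]
  · intro f' hfm hf hKf hW
    have hk := stmt7_key μ δy δc hym hcm hy hc η f' hfm hf
    have h1 : 0 ≤ ∫ x, (δy x - η * δc x) * ((if η * δc x < δy x then (1:ℝ) else 0) - f' x) ∂μ :=
      integral_nonneg (stmt7_nonneg δy δc η f' hf)
    have h2 := hmult f' hfm hf hKf
    have hzero : (∫ x, (δy x - η * δc x) * ((if η * δc x < δy x then (1:ℝ) else 0) - f' x) ∂μ) = 0 := by
      linarith [hk]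
    -- integrability of the integrand
    have hint : Integrable (fun x => (δy x - η * δc x) * ((if η * δc x < δy x then (1:ℝ) else 0) - f' x)) μ := by
      have heq : (fun x => (δy x - η * δc x) * ((if η * δc x < δy x then (1:ℝ) else 0) - f' x))
          = fun x => (δy x * (if η * δc x < δy x then (1:ℝ) else 0) - δy x * f' x)
            - η * (δc x * (if η * δc x < δy x then (1:ℝ) else 0) - δc x * f' x) := by
        funext x; ring
      rw [heq]
      exact (((stmt7_intmul μ δy _ hym hy (stmt7_fstar_meas δy δc hym hcm η) (stmt7_fstar_mem δy δc η)).sub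
        (stmt7_intmul μ δy f' hym hy hfm hf)).sub
        (((stmt7_intmul μ δc _ hcm hc (stmt7_fstar_meas δy δc hym hcm η) (stmt7_fstar_mem δy δc η)).sub
        (stmt7_intmul μ δc f' hcm hc hfm hf)).const_mul η))
    have hae : (fun x => (δy x - η * δc x) * ((if η * δc x < δy x then (1:ℝ) else 0) - f' x)) =ᵐ[μ] 0 := by
      rw [← integral_eq_zero_iff_of_nonneg (stmt7_nonneg δy δc η f' hf) hint] at *
      exact hzero
    have hnt : ∀ᵐ x ∂μ, δy x ≠ η * δc x := by
      rw [ae_iff]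
      simpa using htie
    filter_upwards [hae, hnt] with x hx hxt
    simp only [Pi.zero_apply] at hx
    by_cases h : η * δc x < δy x
    · simp only [h, if_pos] at hx ⊢
      have hne : δy x - η * δc x ≠ 0 := by intro h'; apply hxt; linarith
      have := mul_eq_zero.mp hx
      rcases this with h' | h'
      · exact absurd h' hne
      · linarith [h']
    · simp only [h, if_neg, not_false_iff] at hx ⊢
      push_neg at h
      have hne : δy x - η * δc x ≠ 0 := by intro h'; apply hxt; linarith
      rcases mul_eq_zero.mp hx with h' | h'
      · exact absurd h' hne
      · linarith [h']
end

section
/- For β(b) = E_Q[δ_c(X)·1{δ_y(X) > b δ_c(X)}] with δ_y, δ_c integrable, the one-sided limits satisfy: lim_{x→b⁻} β(x) = β(b) + E_Q[δ_c⁺(X)·1{δ_y(X) = b δ_c(X)}] and lim_{x→b⁺} β(x) = β(b) − E_Q[δ_c⁻(X)·1{δ_y(X) = b δ_c(X)}], where δ_c⁺ and δ_c⁻ denote the positive and negative parts of δ_c. -/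
open MeasureTheory

/-- `β(b) = E[δc(X)·1{δy(X) > b δc(X)}]`. -/
noncomputable def betaFn {𝓧 : Type*} [MeasurableSpace 𝓧] (μ : Measure 𝓧)
    (δy δc : 𝓧 → ℝ) (b : ℝ) : ℝ :=
  ∫ x, (if b * δc x < δy x then δc x else 0) ∂μ

lemma aux_left (c y b : ℝ) :
    Filter.Tendsto (fun t => if t * c < y then c else 0) (nhdsWithin b (Set.Iio b))
      (nhds ((if b * c < y then c else 0) + (if y = b * c then max c 0 else 0))) := by
  have hmem : ∀ᶠ t in nhdsWithin b (Set.Iio b), t < b :=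
    eventually_mem_nhdsWithin
  rcases lt_trichotomy c 0 with hc | rfl | hc
  · -- c < 0
    rcases lt_or_ge (b * c) y with h | h
    · have htar : (if b * c < y then c else 0) + (if y = b * c then max c 0 else 0) = c := by
        rw [if_pos h, if_neg (by intro he; exact absurd he.symm (ne_of_lt h)), add_zero]
      rw [htar]
      have h' : y / c < b := (div_lt_iff_of_neg hc).mpr h
      have h2 : ∀ᶠ t in nhdsWithin b (Set.Iio b), y / c < t :=
        (eventually_gt_nhds h').filter_mono nhdsWithin_le_nhds
      refine Filter.Tendsto.congr' ?_ (tendsto_const_nhds (x := c))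
      filter_upwards [h2] with t ht
      rw [if_pos ((div_lt_iff_of_neg hc).mp ht)]
    · have htar : (if b * c < y then c else 0) + (if y = b * c then max c 0 else 0) = 0 := by
        rw [if_neg (not_lt.mpr h)]
        split_ifs with he
        · simp [max_eq_right (le_of_lt hc)]
        · simp
      rw [htar]
      refine Filter.Tendsto.congr' ?_ (tendsto_const_nhds (x := (0:ℝ)))
      filter_upwards [hmem] with t ht
      have : y ≤ t * c := le_trans h (by nlinarith)
      rw [if_neg (not_lt.mpr this)]
  · -- c = 0
    simp only [mul_zero, zero_mul] at *
    have htar : (if (0:ℝ) < y then (0:ℝ) else 0) + (if y = 0 then max 0 0 else 0) = 0 := by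
      split_ifs <;> simp
    rw [htar]
    refine Filter.Tendsto.congr' ?_ (tendsto_const_nhds (x := (0:ℝ)))
    filter_upwards with t
    split_ifs <;> rfl
  · -- 0 < c
    rcases lt_or_ge y (b * c) with h | h
    · have htar : (if b * c < y then c else 0) + (if y = b * c then max c 0 else 0) = 0 := by
        rw [if_neg (not_lt.mpr (le_of_lt h)), if_neg (ne_of_lt h), add_zero]
      rw [htar]
      have h' : y / c < b := (div_lt_iff₀ hc).mpr h
      have h2 : ∀ᶠ t in nhdsWithin b (Set.Iio b), y / c < t :=
        (eventually_gt_nhds h').filter_mono nhdsWithin_le_nhds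
      refine Filter.Tendsto.congr' ?_ (tendsto_const_nhds (x := (0:ℝ)))
      filter_upwards [h2] with t ht
      have : y < t * c := (div_lt_iff₀ hc).mp ht
      rw [if_neg (not_lt.mpr (le_of_lt this))]
    · have htar : (if b * c < y then c else 0) + (if y = b * c then max c 0 else 0) = c := by
        rcases lt_or_eq_of_le h with h' | h'
        · rw [if_pos h', if_neg (by intro he; exact absurd he.symm (ne_of_lt h')), add_zero]
        · rw [if_neg (by rw [h']; exact lt_irrefl _), if_pos h'.symm,
            max_eq_left (le_of_lt hc), zero_add]
      rw [htar]
      refine Filter.Tendsto.congr' ?_ (tendsto_const_nhds (x := c))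
      filter_upwards [hmem] with t ht
      have : t * c < y := lt_of_lt_of_le (by nlinarith) h
      rw [if_pos this]

lemma aux_right (c y b : ℝ) :
    Filter.Tendsto (fun t => if t * c < y then c else 0) (nhdsWithin b (Set.Ioi b))
      (nhds ((if b * c < y then c else 0) - (if y = b * c then max (-c) 0 else 0))) := by
  have hmem : ∀ᶠ t in nhdsWithin b (Set.Ioi b), b < t :=
    eventually_mem_nhdsWithin
  rcases lt_trichotomy c 0 with hc | rfl | hc
  · -- c < 0
    rcases lt_or_ge y (b * c) with h | h
    · have htar : (if b * c < y then c else 0) - (if y = b * c then max (-c) 0 else 0) = 0 := by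
        rw [if_neg (not_lt.mpr (le_of_lt h)), if_neg (ne_of_lt h), sub_zero]
      rw [htar]
      have h' : b < y / c := (lt_div_iff_of_neg hc).mpr h
      have h2 : ∀ᶠ t in nhdsWithin b (Set.Ioi b), t < y / c :=
        (eventually_lt_nhds h').filter_mono nhdsWithin_le_nhds
      refine Filter.Tendsto.congr' ?_ (tendsto_const_nhds (x := (0:ℝ)))
      filter_upwards [h2] with t ht
      have : y < t * c := (lt_div_iff_of_neg hc).mp ht
      rw [if_neg (not_lt.mpr (le_of_lt this))]
    · have htar : (if b * c < y then c else 0) - (if y = b * c then max (-c) 0 else 0) = c := by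
        rcases lt_or_eq_of_le h with h' | h'
        · rw [if_pos h', if_neg (by intro he; exact absurd he.symm (ne_of_lt h')), sub_zero]
        · rw [if_neg (by rw [h']; exact lt_irrefl _), if_pos h'.symm,
            max_eq_left (by linarith), zero_sub, neg_neg]
      rw [htar]
      refine Filter.Tendsto.congr' ?_ (tendsto_const_nhds (x := c))
      filter_upwards [hmem] with t ht
      have : t * c < y := lt_of_lt_of_le (by nlinarith) h
      rw [if_pos this]
  · -- c = 0
    simp only [mul_zero, zero_mul] at *
    have htar : (if (0:ℝ) < y then (0:ℝ) else 0) - (if y = 0 then max (-0) 0 else 0) = 0 := by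
      split_ifs <;> simp
    rw [htar]
    refine Filter.Tendsto.congr' ?_ (tendsto_const_nhds (x := (0:ℝ)))
    filter_upwards with t
    split_ifs <;> rfl
  · -- 0 < c
    rcases lt_or_ge (b * c) y with h | h
    · have htar : (if b * c < y then c else 0) - (if y = b * c then max (-c) 0 else 0) = c := by
        rw [if_pos h, if_neg (by intro he; exact absurd he.symm (ne_of_lt h)), sub_zero]
      rw [htar]
      have h' : b < y / c := (lt_div_iff₀ hc).mpr h
      have h2 : ∀ᶠ t in nhdsWithin b (Set.Ioi b), t < y / c :=
        (eventually_lt_nhds h').filter_mono nhdsWithin_le_nhds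
      refine Filter.Tendsto.congr' ?_ (tendsto_const_nhds (x := c))
      filter_upwards [h2] with t ht
      rw [if_pos ((lt_div_iff₀ hc).mp ht)]
    · have htar : (if b * c < y then c else 0) - (if y = b * c then max (-c) 0 else 0) = 0 := by
        rw [if_neg (not_lt.mpr h)]
        split_ifs with he
        · simp [max_eq_right (by linarith : -c ≤ 0)]
        · simp
      rw [htar]
      refine Filter.Tendsto.congr' ?_ (tendsto_const_nhds (x := (0:ℝ)))
      filter_upwards [hmem] with t ht
      have : y ≤ t * c := le_trans h (by nlinarith)
      rw [if_neg (not_lt.mpr this)]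

/-- one-sided limits of `β` at any point `b`:
`lim_{x→b⁻} β(x) = β(b) + E[δc⁺·1{δy = b δc}]` and
`lim_{x→b⁺} β(x) = β(b) − E[δc⁻·1{δy = b δc}]`. -/
theorem stmt9 {𝓧 : Type*} [MeasurableSpace 𝓧] (μ : Measure 𝓧) [IsProbabilityMeasure μ]
    (δy δc : 𝓧 → ℝ) (hym : Measurable δy) (hcm : Measurable δc)
    (hy : Integrable δy μ) (hc : Integrable δc μ) (b : ℝ) :
    Filter.Tendsto (betaFn μ δy δc) (nhdsWithin b (Set.Iio b))
      (nhds (betaFn μ δy δc b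
        + ∫ x, (if δy x = b * δc x then max (δc x) 0 else 0) ∂μ)) ∧
    Filter.Tendsto (betaFn μ δy δc) (nhdsWithin b (Set.Ioi b))
      (nhds (betaFn μ δy δc b
        - ∫ x, (if δy x = b * δc x then max (-δc x) 0 else 0) ∂μ)) := by
  have hFmeas : ∀ t : ℝ,
      AEStronglyMeasurable (fun x => if t * δc x < δy x then δc x else 0) μ := fun t =>
    ((Measurable.ite (measurableSet_lt (hcm.const_mul t) hym) hcm
      measurable_const)).aestronglyMeasurable
  have hFbound : ∀ t : ℝ, ∀ᵐ x ∂μ, ‖if t * δc x < δy x then δc x else 0‖ ≤ ‖δc x‖ := by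
    intro t
    refine Filter.Eventually.of_forall fun x => ?_
    split_ifs <;> simp [Real.norm_eq_abs, abs_nonneg]
  have hbound : Integrable (fun x => ‖δc x‖) μ := hc.norm
  have hint1 : Integrable (fun x => if b * δc x < δy x then δc x else 0) μ :=
    hc.mono (hFmeas b) (hFbound b)
  have hint2 : Integrable (fun x => if δy x = b * δc x then max (δc x) 0 else 0) μ := by
    refine hc.mono ((Measurable.ite (measurableSet_eq_fun hym (hcm.const_mul b))
      (hcm.max measurable_const) measurable_const)).aestronglyMeasurable
      (Filter.Eventually.of_forall fun x => ?_)
    split_ifs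
    · rw [Real.norm_eq_abs, Real.norm_eq_abs, abs_of_nonneg (le_max_right _ _)]
      exact max_le (le_abs_self _) (abs_nonneg _)
    · simp
  have hint3 : Integrable (fun x => if δy x = b * δc x then max (-δc x) 0 else 0) μ := by
    refine hc.mono ((Measurable.ite (measurableSet_eq_fun hym (hcm.const_mul b))
      (hcm.neg.max measurable_const) measurable_const)).aestronglyMeasurable
      (Filter.Eventually.of_forall fun x => ?_)
    split_ifs
    · rw [Real.norm_eq_abs, Real.norm_eq_abs, abs_of_nonneg (le_max_right _ _)]
      exact max_le (by rw [← abs_neg]; exact le_abs_self _) (abs_nonneg _)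
    · simp
  constructor
  · have h := MeasureTheory.tendsto_integral_filter_of_dominated_convergence
      (μ := μ) (bound := fun x => ‖δc x‖)
      (F := fun t x => if t * δc x < δy x then δc x else 0)
      (f := fun x => (if b * δc x < δy x then δc x else 0)
        + (if δy x = b * δc x then max (δc x) 0 else 0))
      (l := nhdsWithin b (Set.Iio b))
      (Filter.Eventually.of_forall hFmeas) (Filter.Eventually.of_forall hFbound) hbound
      (Filter.Eventually.of_forall fun x => aux_left (δc x) (δy x) b)
    rw [integral_add hint1 hint2] at h
    exact h
  · have h := MeasureTheory.tendsto_integral_filter_of_dominated_convergence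
      (μ := μ) (bound := fun x => ‖δc x‖)
      (F := fun t x => if t * δc x < δy x then δc x else 0)
      (f := fun x => (if b * δc x < δy x then δc x else 0)
        - (if δy x = b * δc x then max (-δc x) 0 else 0))
      (l := nhdsWithin b (Set.Ioi b))
      (Filter.Eventually.of_forall hFmeas) (Filter.Eventually.of_forall hFbound) hbound
      (Filter.Eventually.of_forall fun x => aux_right (δc x) (δy x) b)
    rw [integral_sub hint1 hint3] at h
    exact h
end

section
/- (Maurer's lemma.) Let X be a random variable taking values in [0,1] with mean μ, let X₁,…,Xₙ be i.i.d. copies of X, and let X'₁,…,X'ₙ be i.i.d. Bernoulli(μ) random variables. Then for any convex function f: [0,1]ⁿ → ℝ, E[f(X₁,…,Xₙ)] ≤ E[f(X'₁,…,X'ₙ)]. -/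
/-!
Every point `x` of the cube `[0,1]^ι` is the barycentre of the vertices `ε ∈ {0,1}^ι` with the
product weights `∏ᵢ xᵢ^{εᵢ} (1 - xᵢ)^{1-εᵢ}`, so by Jensen a convex `f` lies below its multilinear
interpolant on the vertices. The interpolant is affine in each coordinate, so its integral against
a product measure depends only on the coordinate means, which agree for `μ` and `Bernoulli(p)`;
and the Bernoulli product measure lives on the vertices, where the interpolant equals `f`.
-/

open MeasureTheory

variable {ι : Type*}

def cubeVertex (ε : ι → Bool) : ι → ℝ := fun i => if ε i then 1 else 0

lemma cubeVertex_mem_Icc (ε : ι → Bool) : cubeVertex ε ∈ Set.Icc (0 : ι → ℝ) 1 :=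
  ⟨fun i => by unfold cubeVertex; split_ifs <;> norm_num,
    fun i => by unfold cubeVertex; split_ifs <;> norm_num⟩

section Weight

variable [Fintype ι]

def cubeWeight (x : ι → ℝ) (ε : ι → Bool) : ℝ := ∏ i, if ε i then x i else 1 - x i

lemma cubeWeight_nonneg {x : ι → ℝ} (hx : x ∈ Set.Icc (0 : ι → ℝ) 1) (ε : ι → Bool) :
    0 ≤ cubeWeight x ε :=
  Finset.prod_nonneg fun i _ => by
    split_ifs
    · exact hx.1 i
    · exact sub_nonneg.2 (hx.2 i)

lemma cubeWeight_cubeVertex (ε ε' : ι → Bool) :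
    cubeWeight (cubeVertex ε) ε' = if ε' = ε then 1 else 0 := by
  split_ifs with h
  · subst h
    exact Finset.prod_eq_one fun i _ => by cases h : ε' i <;> simp [cubeVertex, h]
  · obtain ⟨i, hi⟩ := Function.ne_iff.1 h
    exact Finset.prod_eq_zero (Finset.mem_univ i) (by cases h' : ε i <;> simp_all [cubeVertex])

variable {μ : ι → Measure ℝ} [∀ i, IsProbabilityMeasure (μ i)]

lemma integrable_cubeWeight_pi (hμ : ∀ i, Integrable id (μ i)) (ε : ι → Bool) :
    Integrable (fun x => cubeWeight x ε) (Measure.pi μ) :=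
  Integrable.fintype_prod (f := fun i t => if ε i then t else 1 - t) fun i => by
    cases ε i
    · exact (integrable_const 1).sub (hμ i)
    · exact hμ i

lemma integral_cubeWeight_pi (hμ : ∀ i, Integrable id (μ i)) (ε : ι → Bool) :
    ∫ x, cubeWeight x ε ∂(Measure.pi μ) = cubeWeight (fun i => ∫ t, t ∂(μ i)) ε := by
  unfold cubeWeight
  rw [integral_fintype_prod_eq_prod (fun i t => if ε i then t else 1 - t)]
  refine Finset.prod_congr rfl fun i _ => ?_
  have hid : Integrable (fun t : ℝ => t) (μ i) := hμ i
  cases ε i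
  · simp [integral_sub (integrable_const 1) hid]
  · rfl

end Weight

section Interpolant

variable [Fintype ι] [DecidableEq ι]

def cubeInterpolant (f : (ι → ℝ) → ℝ) (x : ι → ℝ) : ℝ :=
  ∑ ε, cubeWeight x ε * f (cubeVertex ε)

lemma sum_cubeWeight (x : ι → ℝ) : ∑ ε, cubeWeight x ε = 1 := by
  unfold cubeWeight
  rw [← Fintype.prod_sum (fun i (b : Bool) => if b then x i else 1 - x i)]
  simp

lemma sum_cubeWeight_smul_cubeVertex (x : ι → ℝ) : ∑ ε, cubeWeight x ε • cubeVertex ε = x := by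
  funext j
  have hterm : ∀ ε : ι → Bool, cubeWeight x ε * cubeVertex ε j =
      ∏ i, (if ε i then x i else 1 - x i) * (if i = j then (if ε i then 1 else 0) else 1) := by
    intro ε
    rw [Finset.prod_mul_distrib, Finset.prod_ite_eq']
    simp [cubeWeight, cubeVertex]
  simp only [Finset.sum_apply, Pi.smul_apply, smul_eq_mul, hterm]
  rw [← Fintype.prod_sum (fun i (b : Bool) =>
    (if b then x i else 1 - x i) * (if i = j then (if b then 1 else 0) else 1))]
  simp

theorem ConvexOn.le_cubeInterpolant {f : (ι → ℝ) → ℝ}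
    (hf : ConvexOn ℝ (Set.Icc 0 1) f) {x : ι → ℝ} (hx : x ∈ Set.Icc (0 : ι → ℝ) 1) :
    f x ≤ cubeInterpolant f x := by
  conv_lhs => rw [← sum_cubeWeight_smul_cubeVertex x]
  exact hf.map_sum_le (fun ε _ => cubeWeight_nonneg hx ε) (sum_cubeWeight x)
    (fun ε _ => cubeVertex_mem_Icc ε)

lemma cubeInterpolant_cubeVertex (f : (ι → ℝ) → ℝ) (ε : ι → Bool) :
    cubeInterpolant f (cubeVertex ε) = f (cubeVertex ε) := by
  simp [cubeInterpolant, cubeWeight_cubeVertex]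

lemma cubeInterpolant_eq_of_forall_eq_zero_or_eq_one (f : (ι → ℝ) → ℝ) {x : ι → ℝ}
    (hx : ∀ i, x i = 0 ∨ x i = 1) : cubeInterpolant f x = f x := by
  have hvertex : cubeVertex (fun i => decide (x i = 1)) = x := by
    funext i
    rcases hx i with h | h <;> simp [cubeVertex, h]
  rw [← hvertex, cubeInterpolant_cubeVertex]

variable {μ : ι → Measure ℝ} [∀ i, IsProbabilityMeasure (μ i)]

lemma integrable_cubeInterpolant_pi (hμ : ∀ i, Integrable id (μ i)) (f : (ι → ℝ) → ℝ) :
    Integrable (cubeInterpolant f) (Measure.pi μ) :=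
  integrable_finsetSum _ fun ε _ => (integrable_cubeWeight_pi hμ ε).mul_const _

lemma integral_cubeInterpolant_pi (hμ : ∀ i, Integrable id (μ i)) (f : (ι → ℝ) → ℝ) :
    ∫ x, cubeInterpolant f x ∂(Measure.pi μ) = cubeInterpolant f (fun i => ∫ t, t ∂(μ i)) := by
  unfold cubeInterpolant
  rw [integral_finsetSum _ fun ε _ => (integrable_cubeWeight_pi hμ ε).mul_const _]
  simp only [integral_mul_const, integral_cubeWeight_pi hμ]

end Interpolant

lemma MeasureTheory.Measure.ae_pi_forall [Fintype ι] {α : ι → Type*}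
    [∀ i, MeasurableSpace (α i)] {μ : ∀ i, Measure (α i)} [∀ i, SigmaFinite (μ i)]
    {P : ∀ i, α i → Prop} (h : ∀ i, ∀ᵐ t ∂(μ i), P i t) :
    ∀ᵐ x ∂(Measure.pi μ), ∀ i, P i (x i) :=
  Filter.eventually_all.2 fun i => Measure.tendsto_eval_ae_ae.eventually (h i)

section Bernoulli

variable {p : ℝ} {ν : Measure ℝ}

lemma ae_eq_zero_or_eq_one_of_eq_bernoulli
    (hν : ν = ENNReal.ofReal p • Measure.dirac 1 + ENNReal.ofReal (1 - p) • Measure.dirac 0) :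
    ∀ᵐ t ∂ν, t = 0 ∨ t = 1 := by
  have hmeas : MeasurableSet {t : ℝ | t = 0 ∨ t = 1} :=
    (measurableSet_singleton 0).union (measurableSet_singleton 1)
  rw [hν, ae_add_measure_iff]
  exact ⟨Measure.ae_smul_measure ((ae_dirac_iff hmeas).2 (Or.inr rfl)) _,
    Measure.ae_smul_measure ((ae_dirac_iff hmeas).2 (Or.inl rfl)) _⟩

lemma integral_id_of_eq_bernoulli (hp : 0 ≤ p)
    (hν : ν = ENNReal.ofReal p • Measure.dirac 1 + ENNReal.ofReal (1 - p) • Measure.dirac 0) :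
    ∫ t, t ∂ν = p := by
  have hint (a c : ℝ) : Integrable (fun t : ℝ => t) (ENNReal.ofReal c • Measure.dirac a) :=
    (integrable_dirac (by simp)).smul_measure ENNReal.ofReal_ne_top
  rw [hν, integral_add_measure (hint 1 p) (hint 0 (1 - p)), integral_smul_measure,
    integral_smul_measure, integral_dirac, integral_dirac, ENNReal.toReal_ofReal hp]
  simp

end Bernoulli

theorem stmt10_general (n : ℕ) (μ : Measure ℝ) [IsProbabilityMeasure μ]
    (hsupp : ∀ᵐ x ∂μ, x ∈ Set.Icc (0:ℝ) 1)
    (p : ℝ) (hp : p = ∫ x, x ∂μ)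
    (ν : Measure ℝ) [IsProbabilityMeasure ν]
    (hν : ν = ENNReal.ofReal p • Measure.dirac (1:ℝ)
        + ENNReal.ofReal (1 - p) • Measure.dirac (0:ℝ))
    (f : (Fin n → ℝ) → ℝ)
    (hconv : ConvexOn ℝ (Set.Icc (0 : Fin n → ℝ) 1) f)
    (hint1 : Integrable f (Measure.pi fun _ : Fin n => μ)) :
    (∫ x, f x ∂(Measure.pi fun _ : Fin n => μ))
      ≤ ∫ x, f x ∂(Measure.pi fun _ : Fin n => ν) := by
  have hp0 : 0 ≤ p := hp ▸ integral_nonneg_of_ae (hsupp.mono fun x hx => hx.1)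
  have hν01 := ae_eq_zero_or_eq_one_of_eq_bernoulli hν
  have hμid : Integrable id μ := Integrable.of_mem_Icc 0 1 aemeasurable_id hsupp
  have hνid : Integrable id ν := Integrable.of_mem_Icc 0 1 aemeasurable_id <|
    hν01.mono fun t ht => by rcases ht with rfl | rfl <;> simp
  calc (∫ x, f x ∂(Measure.pi fun _ : Fin n => μ))
      ≤ ∫ x, cubeInterpolant f x ∂(Measure.pi fun _ : Fin n => μ) :=
        integral_mono_ae hint1 (integrable_cubeInterpolant_pi (fun _ => hμid) f) <|
          (Measure.ae_pi_forall fun _ => hsupp).mono fun x hx =>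
            hconv.le_cubeInterpolant ⟨fun i => (hx i).1, fun i => (hx i).2⟩
    _ = cubeInterpolant f (fun _ => p) := by rw [integral_cubeInterpolant_pi (fun _ => hμid), hp]
    _ = ∫ x, cubeInterpolant f x ∂(Measure.pi fun _ : Fin n => ν) := by
        rw [integral_cubeInterpolant_pi (fun _ => hνid), integral_id_of_eq_bernoulli hp0 hν]
    _ = ∫ x, f x ∂(Measure.pi fun _ : Fin n => ν) :=
        integral_congr_ae <| (Measure.ae_pi_forall fun _ => hν01).mono fun x hx =>
          cubeInterpolant_eq_of_forall_eq_zero_or_eq_one f hx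

/-- Maurer's lemma: let `μ` be the law of a random variable with values in
`[0,1]` and mean `p`, and let `ν` be the Bernoulli(`p`) law on `ℝ`.  For any convex
function `f : [0,1]ⁿ → ℝ`, `E[f(X₁,…,Xₙ)] ≤ E[f(X'₁,…,X'ₙ)]`, where the `Xᵢ` are i.i.d.
with law `μ` and the `X'ᵢ` are i.i.d. Bernoulli(`p`). -/
theorem stmt10 (n : ℕ) (μ : Measure ℝ) [IsProbabilityMeasure μ]
    (hsupp : ∀ᵐ x ∂μ, x ∈ Set.Icc (0:ℝ) 1)
    (p : ℝ) (hp : p = ∫ x, x ∂μ)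
    (ν : Measure ℝ) [IsProbabilityMeasure ν]
    (hν : ν = ENNReal.ofReal p • Measure.dirac (1:ℝ)
        + ENNReal.ofReal (1 - p) • Measure.dirac (0:ℝ))
    (f : (Fin n → ℝ) → ℝ) (hfm : Measurable f)
    (hconv : ConvexOn ℝ (Set.Icc (0 : Fin n → ℝ) 1) f)
    (hint1 : Integrable f (Measure.pi fun _ : Fin n => μ))
    (hint2 : Integrable f (Measure.pi fun _ : Fin n => ν)) :
    (∫ x, f x ∂(Measure.pi fun _ : Fin n => μ))
      ≤ ∫ x, f x ∂(Measure.pi fun _ : Fin n => ν) :=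
  stmt10_general n μ hsupp p hp ν hν f hconv hint1
end

section
/- The function ξ(n) = Σ_{k=0}^{n} C(n,k) (k/n)^k (1 − k/n)^{n−k} satisfies √n ≤ ξ(n) ≤ 2√n for all n ≥ 1. -/
/-!
Write `m! = s m * √(2m) * (m/e)^m` with Stirling's sequence `s`, which decreases from
`s 1 = e/√2` to `√π`. For `0 < k < n` the powers cancel and the `k`-th term of `ξ(n)` is exactly
`s n / (s k * s (n-k)) * √n / √(2k(n-k))`, while `√n ≤ √k + √(n-k) ≤ √(2n)` compares
`√n / √(k(n-k))` with `1/√k + 1/√(n-k)`. Summing against `∑ 1/√k ≈ 2√n` gives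
`ξ(n) ≤ 2 + (e/π)(2√n - 1)`, and (using `s k ≤ s 2 = e²/4` for `2 ≤ k ≤ n-2`)
`ξ(n) ≥ 2 - √2 + √(n-1)`; both are strong enough once `n ≥ 25`. For `n ≤ 24` the bounds are
checked in integer arithmetic after clearing the denominator `n^n`.
-/

section

open Real Finset Stirling

lemma stirlingSeq_le_of_le {k m : ℕ} (hk : k ≠ 0) (hkm : k ≤ m) :
    stirlingSeq m ≤ stirlingSeq k := by
  obtain ⟨k, rfl⟩ := Nat.exists_eq_succ_of_ne_zero hk
  obtain ⟨m, rfl⟩ := Nat.exists_eq_add_of_le hkm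
  simpa [Nat.succ_add] using stirlingSeq'_antitone (k.le_add_right m)

lemma stirlingSeq_pos {m : ℕ} (hm : m ≠ 0) : 0 < stirlingSeq m :=
  (sqrt_pos.2 pi_pos).trans_le (sqrt_pi_le_stirlingSeq hm)

lemma factorial_eq_stirlingSeq_mul {m : ℕ} (hm : m ≠ 0) :
    (m.factorial : ℝ) = stirlingSeq m * (√2 * √m * ((m : ℝ) / exp 1) ^ m) := by
  have : (0 : ℝ) < m := by positivity
  rw [stirlingSeq, sqrt_mul zero_le_two]
  field_simp

lemma stirlingSeq_two : stirlingSeq 2 = exp 1 ^ 2 / 4 := by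
  rw [stirlingSeq, show √(2 * ((2 : ℕ) : ℝ)) = 2 by norm_num]
  field_simp
  norm_num

lemma sqrt_add_div_le_inv_sqrt_add_inv_sqrt {a b : ℝ} (ha : 0 < a) (hb : 0 < b) :
    √(a + b) / (√a * √b) ≤ (√a)⁻¹ + (√b)⁻¹ := by
  have : 0 < √a * √b := by positivity
  rw [inv_add_inv (by positivity) (by positivity)]
  gcongr
  rw [sqrt_le_left (by positivity), add_sq, sq_sqrt ha.le, sq_sqrt hb.le]
  nlinarith [sqrt_nonneg a, sqrt_nonneg b]

lemma inv_sqrt_add_inv_sqrt_le {a b : ℝ} (ha : 0 < a) (hb : 0 < b) :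
    (√a)⁻¹ + (√b)⁻¹ ≤ √2 * √(a + b) / (√a * √b) := by
  have : 0 < √a * √b := by positivity
  rw [inv_add_inv (by positivity) (by positivity), ← sqrt_mul zero_le_two]
  gcongr
  rw [le_sqrt (by positivity) (by positivity), add_sq, sq_sqrt ha.le, sq_sqrt hb.le]
  nlinarith [sq_nonneg (√a - √b), sq_sqrt ha.le, sq_sqrt hb.le]

lemma inv_sqrt_add_one_le {x : ℝ} (hx : 0 ≤ x) : (√(x + 1))⁻¹ ≤ 2 * (√(x + 1) - √x) := by
  have hu : 0 < √(x + 1) := sqrt_pos.2 (by linarith)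
  rw [inv_le_iff_one_le_mul₀' hu]
  nlinarith [sq_sqrt hx, sq_sqrt (show 0 ≤ x + 1 by linarith), sq_nonneg (√(x + 1) - √x)]

lemma two_mul_sqrt_add_one_sub_le {x : ℝ} (hx : 0 < x) : 2 * (√(x + 1) - √x) ≤ (√x)⁻¹ := by
  have hv : 0 < √x := sqrt_pos.2 hx
  rw [← one_div, le_div_iff₀ hv]
  nlinarith [sq_sqrt hx.le, sq_sqrt (show 0 ≤ x + 1 by linarith), sq_nonneg (√(x + 1) - √x)]

lemma sum_Icc_one_inv_sqrt_le {m : ℕ} (hm : m ≠ 0) :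
    ∑ k ∈ Icc 1 m, (√k)⁻¹ ≤ 2 * √m - 1 := by
  induction m, Nat.one_le_iff_ne_zero.2 hm using Nat.le_induction with
  | base => norm_num
  | succ m hm ih =>
    rw [sum_Icc_succ_top (by omega)]
    have := inv_sqrt_add_one_le (Nat.cast_nonneg (α := ℝ) m)
    push_cast
    linarith [ih (by omega)]

lemma two_mul_sqrt_sub_le_sum_Icc_inv_sqrt {a : ℕ} (ha : a ≠ 0) (m : ℕ) :
    2 * √((m + 1 : ℕ) : ℝ) - 2 * √a ≤ ∑ k ∈ Icc a m, (√k)⁻¹ := by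
  induction m with
  | zero =>
    rw [Icc_eq_empty (by omega), sum_empty, sub_nonpos]
    gcongr
    exact_mod_cast Nat.one_le_iff_ne_zero.2 ha
  | succ m ih =>
    rcases lt_or_ge (m + 1) a with h | h
    · rw [Icc_eq_empty (by omega), sum_empty, sub_nonpos]
      gcongr
      exact_mod_cast h
    · rw [sum_Icc_succ_top h]
      have := two_mul_sqrt_add_one_sub_le (show (0 : ℝ) < (m + 1 : ℕ) by positivity)
      push_cast at this ih ⊢
      linarith

lemma sum_Icc_reflect {M : Type*} [AddCommMonoid M] (f : ℕ → M) (n a : ℕ) :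
    ∑ k ∈ Icc a (n - a), f (n - k) = ∑ k ∈ Icc a (n - a), f k := by
  refine sum_nbij' (n - ·) (n - ·) ?_ ?_ ?_ ?_ fun _ _ ↦ rfl <;>
    intro k hk <;> simp only [mem_Icc] at * <;> omega

noncomputable def xiTerm (n k : ℕ) : ℝ :=
  (n.choose k : ℝ) * ((k : ℝ) / n) ^ k * (1 - (k : ℝ) / n) ^ (n - k)

noncomputable def xi (n : ℕ) : ℝ := ∑ k ∈ range (n + 1), xiTerm n k

lemma xiTerm_nonneg {n k : ℕ} (hk : k ≤ n) : 0 ≤ xiTerm n k := by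
  have : (k : ℝ) / n ≤ 1 := div_le_one_of_le₀ (by exact_mod_cast hk) n.cast_nonneg
  have : 0 ≤ 1 - (k : ℝ) / n := by linarith
  unfold xiTerm
  positivity

lemma xi_eq_two_add {n : ℕ} (hn : n ≠ 0) : xi n = 2 + ∑ k ∈ Icc 1 (n - 1), xiTerm n k := by
  have hrange : range (n + 1) = insert 0 (insert n (Icc 1 (n - 1))) := by
    ext k; simp only [mem_range, mem_insert, mem_Icc]; omega
  have hn' : (n : ℝ) ≠ 0 := by positivity
  rw [xi, hrange, sum_insert (by simp only [mem_insert, mem_Icc]; omega),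
    sum_insert (by simp only [mem_Icc]; omega)]
  simp only [xiTerm, Nat.choose_zero_right, Nat.choose_self, Nat.cast_one, Nat.cast_zero, zero_div,
    div_self hn', pow_zero, one_pow, sub_zero, sub_self, Nat.sub_zero, Nat.sub_self, mul_one]
  ring

lemma xiTerm_add {k l : ℕ} (hk : k ≠ 0) (hl : l ≠ 0) :
    xiTerm (k + l) k = stirlingSeq (k + l) / (stirlingSeq k * stirlingSeq l) *
      (√(k + l : ℝ) / (√2 * √k * √l)) := by
  have hsk := stirlingSeq_pos hk
  have hsl := stirlingSeq_pos hl
  have hcompl : 1 - (k : ℝ) / (k + l : ℕ) = l / (k + l : ℕ) := by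
    push_cast; field_simp; ring
  rw [xiTerm, hcompl, Nat.add_sub_cancel_left, Nat.cast_add_choose, factorial_eq_stirlingSeq_mul hk,
    factorial_eq_stirlingSeq_mul hl, factorial_eq_stirlingSeq_mul (by omega)]
  push_cast
  simp only [div_pow, pow_add]
  field_simp

lemma xiTerm_add_le {k l : ℕ} (hk : k ≠ 0) (hl : l ≠ 0) :
    xiTerm (k + l) k ≤ exp 1 / (2 * π) * ((√k)⁻¹ + (√l)⁻¹) := by
  have hk' : (0 : ℝ) < k := by positivity
  have hl' : (0 : ℝ) < l := by positivity
  have hstirling : stirlingSeq (k + l) / (stirlingSeq k * stirlingSeq l) ≤ exp 1 / √2 / π := by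
    rw [← stirlingSeq_one, ← mul_self_sqrt pi_pos.le]
    exact div_le_div₀ (stirlingSeq_pos one_ne_zero).le
      (stirlingSeq_le_of_le one_ne_zero (by omega)) (by positivity)
      (mul_le_mul (sqrt_pi_le_stirlingSeq hk) (sqrt_pi_le_stirlingSeq hl) (sqrt_nonneg π)
        (stirlingSeq_pos hk).le)
  calc xiTerm (k + l) k
      = stirlingSeq (k + l) / (stirlingSeq k * stirlingSeq l) *
          (√(k + l : ℝ) / (√k * √l)) / √2 := by
        rw [xiTerm_add hk hl]; field_simp
    _ ≤ exp 1 / √2 / π * ((√k)⁻¹ + (√l)⁻¹) / √2 := by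
        have := stirlingSeq_pos (show k + l ≠ 0 by omega)
        gcongr
        exact sqrt_add_div_le_inv_sqrt_add_inv_sqrt hk' hl'
    _ = exp 1 / (2 * π) * ((√k)⁻¹ + (√l)⁻¹) := by
        field_simp
        rw [sq_sqrt zero_le_two]

lemma le_xiTerm_add {j k l : ℕ} (hj : j ≠ 0) (hjk : j ≤ k) (hjl : j ≤ l) :
    √π / (2 * stirlingSeq j ^ 2) * ((√k)⁻¹ + (√l)⁻¹) ≤ xiTerm (k + l) k := by
  have hk : k ≠ 0 := by omega
  have hl : l ≠ 0 := by omega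
  have hk' : (0 : ℝ) < k := by positivity
  have hl' : (0 : ℝ) < l := by positivity
  have hstirling :
      √π / stirlingSeq j ^ 2 ≤ stirlingSeq (k + l) / (stirlingSeq k * stirlingSeq l) := by
    rw [sq]
    exact div_le_div₀ (stirlingSeq_pos (by omega)).le (sqrt_pi_le_stirlingSeq (by omega))
      (by positivity [stirlingSeq_pos hk, stirlingSeq_pos hl])
      (mul_le_mul (stirlingSeq_le_of_le hj hjk) (stirlingSeq_le_of_le hj hjl)
        (stirlingSeq_pos hl).le (stirlingSeq_pos hj).le)
  have hsj := stirlingSeq_pos hj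
  calc √π / (2 * stirlingSeq j ^ 2) * ((√k)⁻¹ + (√l)⁻¹)
      ≤ √π / (2 * stirlingSeq j ^ 2) * (√2 * √(k + l : ℝ) / (√k * √l)) := by
        gcongr
        exact inv_sqrt_add_inv_sqrt_le hk' hl'
    _ = √π / stirlingSeq j ^ 2 * (√(k + l : ℝ) / (√2 * √k * √l)) := by
        field_simp
        rw [sq_sqrt zero_le_two]
    _ ≤ stirlingSeq (k + l) / (stirlingSeq k * stirlingSeq l) *
          (√(k + l : ℝ) / (√2 * √k * √l)) := by
        gcongr
    _ = xiTerm (k + l) k := (xiTerm_add hk hl).symm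

lemma xi_le_two_mul_sqrt {n : ℕ} (hn : 25 ≤ n) : xi n ≤ 2 * √n := by
  have hsum : ∑ k ∈ Icc 1 (n - 1), xiTerm n k ≤ exp 1 / π * (2 * √n - 1) := by
    calc ∑ k ∈ Icc 1 (n - 1), xiTerm n k
        ≤ ∑ k ∈ Icc 1 (n - 1), exp 1 / (2 * π) * ((√k)⁻¹ + (√(n - k : ℕ))⁻¹) := by
          refine sum_le_sum fun k hk ↦ ?_
          obtain ⟨hk1, hkn⟩ := mem_Icc.1 hk
          have := xiTerm_add_le (k := k) (l := n - k) (by omega) (by omega)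
          rwa [Nat.add_sub_cancel' (by omega)] at this
      _ = exp 1 / π * ∑ k ∈ Icc 1 (n - 1), (√k)⁻¹ := by
          rw [← mul_sum, sum_add_distrib, sum_Icc_reflect (fun k ↦ (√(k : ℝ))⁻¹)]
          ring
      _ ≤ exp 1 / π * (2 * √n - 1) := by
          gcongr
          refine (sum_Icc_one_inv_sqrt_le (by omega)).trans ?_
          gcongr
          exact_mod_cast n.sub_le 1
  have he : exp 1 < 2.7182818286 := exp_one_lt_d9
  have hq : exp 1 / π ≤ 0.87 := by
    rw [div_le_iff₀ pi_pos]; linarith [pi_gt_d2]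
  have hsqrt : 5 ≤ √n := by
    rw [le_sqrt (by norm_num) (by positivity)]; norm_num; exact_mod_cast hn
  rw [xi_eq_two_add (by omega)]
  nlinarith

lemma sqrt_le_xi {n : ℕ} (hn : 3 ≤ n) : √n ≤ xi n := by
  have hconst : 1 / 4 ≤ √π / (2 * stirlingSeq 2 ^ 2) := by
    have he : exp 1 ^ 4 < 2.72 ^ 4 :=
      pow_lt_pow_left₀ (exp_one_lt_d9.trans (by norm_num)) (exp_pos 1).le (by norm_num)
    have hpi : 1.77 ≤ √π := by
      rw [le_sqrt (by norm_num) pi_pos.le]; linarith [pi_gt_d2]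
    rw [stirlingSeq_two, show (exp 1 ^ 2 / 4) ^ 2 = exp 1 ^ 4 / 16 by ring,
      le_div_iff₀ (by positivity)]
    linarith
  have hcast : ((n - 1 : ℕ) : ℝ) = n - 1 := by rw [Nat.cast_sub (by omega), Nat.cast_one]
  have hsqrt2 : √2 ≤ √(n - 1 : ℕ) := by
    gcongr
    rw [hcast, le_sub_iff_add_le]
    exact_mod_cast hn
  have hsum : √(n - 1 : ℕ) - √2 ≤ ∑ k ∈ Icc 1 (n - 1), xiTerm n k := by
    calc √(n - 1 : ℕ) - √2
        ≤ √π / (2 * stirlingSeq 2 ^ 2) * (2 * (2 * √(n - 1 : ℕ) - 2 * √2)) := by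
          nlinarith [mul_le_mul_of_nonneg_right hconst (sub_nonneg.2 hsqrt2)]
      _ ≤ √π / (2 * stirlingSeq 2 ^ 2) * (2 * ∑ k ∈ Icc 2 (n - 2), (√k)⁻¹) := by
          gcongr
          have := two_mul_sqrt_sub_le_sum_Icc_inv_sqrt two_ne_zero (n - 2)
          rwa [show n - 2 + 1 = n - 1 by omega] at this
      _ = ∑ k ∈ Icc 2 (n - 2), √π / (2 * stirlingSeq 2 ^ 2) * ((√k)⁻¹ + (√(n - k : ℕ))⁻¹) := by
          rw [← mul_sum, sum_add_distrib, sum_Icc_reflect (fun k ↦ (√(k : ℝ))⁻¹)]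
          ring
      _ ≤ ∑ k ∈ Icc 2 (n - 2), xiTerm n k := by
          refine sum_le_sum fun k hk ↦ ?_
          obtain ⟨hk2, hkn⟩ := mem_Icc.1 hk
          have := le_xiTerm_add (k := k) (l := n - k) two_ne_zero hk2 (by omega)
          rwa [Nat.add_sub_cancel' (by omega)] at this
      _ ≤ ∑ k ∈ Icc 1 (n - 1), xiTerm n k :=
          sum_le_sum_of_subset_of_nonneg (Icc_subset_Icc (by omega) (by omega))
            fun k hk _ ↦ xiTerm_nonneg (by simp only [mem_Icc] at hk; omega)
  have hstep : √n ≤ √(n - 1 : ℕ) + 1 / 2 := by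
    rw [sqrt_le_left (by positivity)]
    nlinarith [sq_sqrt (Nat.cast_nonneg (α := ℝ) (n - 1)), one_lt_sqrt_two]
  have hsqrt2_lt : √2 < 1.5 := by
    rw [sqrt_lt' (by norm_num)]; norm_num
  rw [xi_eq_two_add (by omega)]
  linarith

def xiNumerator (n : ℕ) : ℕ := ∑ k ∈ range (n + 1), n.choose k * k ^ k * (n - k) ^ (n - k)

lemma xi_eq_xiNumerator_div {n : ℕ} (hn : n ≠ 0) : xi n = xiNumerator n / (n : ℝ) ^ n := by
  rw [xi, xiNumerator, Nat.cast_sum, sum_div]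
  refine sum_congr rfl fun k hk ↦ ?_
  have hkn : k ≤ n := Nat.lt_succ_iff.1 (mem_range.1 hk)
  have hn' : (n : ℝ) ≠ 0 := by positivity
  rw [xiTerm, one_sub_div hn', ← Nat.cast_sub hkn, div_pow, div_pow, ← Nat.add_sub_cancel' hkn]
  push_cast
  rw [Nat.add_sub_cancel_left, pow_add]
  field_simp

lemma sqrt_le_xi_and_xi_le_of_xiNumerator_sq {n : ℕ} (hn : n ≠ 0)
    (hlow : n * (n ^ n) ^ 2 ≤ xiNumerator n ^ 2) (hup : xiNumerator n ^ 2 ≤ 4 * n * (n ^ n) ^ 2) :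
    √n ≤ xi n ∧ xi n ≤ 2 * √n := by
  have hpow : (0 : ℝ) < (n : ℝ) ^ n := by positivity
  rw [xi_eq_xiNumerator_div hn, show 2 * √(n : ℝ) = √(4 * n) by
    rw [sqrt_mul zero_le_four, show (4 : ℝ) = 2 ^ 2 by norm_num, sqrt_sq zero_le_two]]
  constructor
  · rw [sqrt_le_left (by positivity), div_pow, le_div_iff₀ (by positivity)]
    exact_mod_cast hlow
  · rw [le_sqrt (by positivity) (by positivity), div_pow, div_le_iff₀ (by positivity)]
    exact_mod_cast hup

lemma sqrt_le_xi_and_xi_le_of_le {n : ℕ} (hn : 1 ≤ n) (h : n ≤ 24) :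
    √n ≤ xi n ∧ xi n ≤ 2 * √n := by
  apply sqrt_le_xi_and_xi_le_of_xiNumerator_sq (by omega) <;> interval_cases n <;> decide

end

/-- `√n ≤ ξ(n) ≤ 2√n` for all `n ≥ 1`, where
`ξ(n) = Σ_{k=0}^{n} C(n,k) (k/n)^k (1 − k/n)^{n−k}` (with `0⁰ = 1`). -/
theorem stmt12 (n : ℕ) (hn : 1 ≤ n) :
    Real.sqrt n ≤ (∑ k ∈ Finset.range (n + 1),
        (n.choose k : ℝ) * ((k : ℝ) / n) ^ k * (1 - (k : ℝ) / n) ^ (n - k)) ∧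
    (∑ k ∈ Finset.range (n + 1),
        (n.choose k : ℝ) * ((k : ℝ) / n) ^ k * (1 - (k : ℝ) / n) ^ (n - k))
      ≤ 2 * Real.sqrt n := by
  rcases le_or_gt n 24 with h | h
  · exact sqrt_le_xi_and_xi_le_of_le hn h
  · exact ⟨sqrt_le_xi (by omega), xi_le_two_mul_sqrt h⟩
end

section
/- Let ρ ≪ π be a Gibbs probability measure over treatment rules with cost B(ρ) = E_Q[δ_c(X) f_{G,ρ}(X)], and assume B(ρ) > E_Q[δ_c(X)·1{δ_c(X)<0}] and Q(δ_y(X) = η_{B(ρ)} δ_c(X)) = 0, so the optimal rule for budget B(ρ) is f*(x) = 1{δ_y(x) − η_{B(ρ)} δ_c(x) > 0} with η_{B(ρ)} ≥ 0 and, if η_{B(ρ)} > 0, K(f*) = B(ρ). Define L(f) = E_Q[(δ_y(X) − η_{B(ρ)} δ_c(X))(f*(X) − f(X))] and R(f) = W(f*) − W(f). Then L(f_{mv,ρ}) ≤ 2·R(f_{G,ρ}), where f_{G,ρ}(x) = ∫ f_θ(x) dρ(θ) and f_{mv,ρ}(x) = 1{f_{G,ρ}(x) > 1/2}. -/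
/-!
With `g = δy - η δc` and `f* = 1{g > 0}`, the complementary-slackness condition
`η (K(f*) - K(f_G)) = 0` turns the regret into `R(f_G) = E[g (f* - f_G)]`. The claim then holds
pointwise: where `f_mv` and `f*` agree the left side vanishes, and where they disagree `f_G` lies
on the wrong side of `1/2`, so `|f* - f_G| ≥ 1/2` with the sign of `g`.
-/

open MeasureTheory Set

lemma integral_mem_Icc_zero_one {Θ : Type*} [MeasurableSpace Θ] {ρ : Measure Θ}
    [IsProbabilityMeasure ρ] {f : Θ → ℝ} (hf : ∀ θ, f θ ∈ Icc (0 : ℝ) 1) :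
    ∫ θ, f θ ∂ρ ∈ Icc (0 : ℝ) 1 := by
  refine ⟨integral_nonneg fun θ => (hf θ).1, ?_⟩
  calc ∫ θ, f θ ∂ρ ≤ ‖∫ θ, f θ ∂ρ‖ := Real.le_norm_self _
    _ ≤ 1 * ρ.real univ := norm_integral_le_of_norm_le_const <| ae_of_all _ fun θ => by
        rw [Real.norm_eq_abs, abs_of_nonneg (hf θ).1]; exact (hf θ).2
    _ = 1 := by simp

lemma ite_one_zero_mem_Icc (P : Prop) [Decidable P] :
    (if P then (1 : ℝ) else 0) ∈ Icc (0 : ℝ) 1 := by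
  split_ifs <;> simp

lemma majorityVote_excess_le_two_mul {a b p : ℝ} (hp : p ∈ Icc (0 : ℝ) 1) :
    (b - a) * ((if a < b then (1 : ℝ) else 0) - (if (1 : ℝ) / 2 < p then (1 : ℝ) else 0))
      ≤ 2 * ((b - a) * ((if a < b then (1 : ℝ) else 0) - p)) := by
  obtain ⟨hp0, hp1⟩ := hp
  split_ifs <;> nlinarith

section Integrals

variable {𝓧 : Type*} [MeasurableSpace 𝓧] {μ : Measure 𝓧}

lemma MeasureTheory.Integrable.mul_of_mem_Icc {h u : 𝓧 → ℝ} (hh : Integrable h μ)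
    (hu : Measurable u) (hu01 : ∀ x, u x ∈ Icc (0 : ℝ) 1) :
    Integrable (fun x => h x * u x) μ :=
  hh.mul_bdd hu.aestronglyMeasurable <| ae_of_all _ fun x => by
    rw [Real.norm_eq_abs, abs_of_nonneg (hu01 x).1]; exact (hu01 x).2

lemma MeasureTheory.Integrable.mul_sub_of_mem_Icc {h u v : 𝓧 → ℝ} (hh : Integrable h μ)
    (hu : Measurable u) (hv : Measurable v) (hu01 : ∀ x, u x ∈ Icc (0 : ℝ) 1)
    (hv01 : ∀ x, v x ∈ Icc (0 : ℝ) 1) :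
    Integrable (fun x => h x * (u x - v x)) μ :=
  hh.mul_bdd (hu.sub hv).aestronglyMeasurable <| ae_of_all _ fun x =>
    (Real.norm_eq_abs _).trans_le <|
      abs_sub_le_of_nonneg_of_le (hu01 x).1 (hu01 x).2 (hv01 x).1 (hv01 x).2

lemma integral_sub_const_mul_mul_sub {y c u v : 𝓧 → ℝ} (η : ℝ) (hy : Integrable y μ)
    (hc : Integrable c μ) (hu : Measurable u) (hv : Measurable v)
    (hu01 : ∀ x, u x ∈ Icc (0 : ℝ) 1) (hv01 : ∀ x, v x ∈ Icc (0 : ℝ) 1) :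
    ∫ x, (y x - η * c x) * (u x - v x) ∂μ
      = (∫ x, y x * u x ∂μ - ∫ x, y x * v x ∂μ)
        - η * (∫ x, c x * u x ∂μ - ∫ x, c x * v x ∂μ) := by
  have hyu := hy.mul_of_mem_Icc hu hu01
  have hyv := hy.mul_of_mem_Icc hv hv01
  have hcu := hc.mul_of_mem_Icc hu hu01
  have hcv := hc.mul_of_mem_Icc hv hv01
  calc ∫ x, (y x - η * c x) * (u x - v x) ∂μ
      = ∫ x, (y x * u x - y x * v x) - η * (c x * u x - c x * v x) ∂μ :=
        integral_congr_ae <| ae_of_all _ fun x => by ring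
    _ = _ := by
      rw [integral_sub (f := fun x => y x * u x - y x * v x)
          (g := fun x => η * (c x * u x - c x * v x)) (hyu.sub hyv) ((hcu.sub hcv).const_mul η),
        integral_const_mul, integral_sub hyu hyv, integral_sub hcu hcv]

end Integrals

theorem stmt15_general {Θ 𝓧 : Type*} [MeasurableSpace Θ] [MeasurableSpace 𝓧]
    (μ : Measure 𝓧)
    (ρ : Measure Θ) [IsProbabilityMeasure ρ]
    (δy δc : 𝓧 → ℝ) (hym : Measurable δy) (hcm : Measurable δc)
    (hy : Integrable δy μ) (hc : Integrable δc μ)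
    (fθ : Θ → 𝓧 → ℝ) (hfθ : ∀ θ x, fθ θ x = 0 ∨ fθ θ x = 1)
    (fG : 𝓧 → ℝ) (hfG : ∀ x, fG x = ∫ θ, fθ θ x ∂ρ) (hGm : Measurable fG)
    (η : ℝ)
    (hcase : η = 0 ∨ (0 < η ∧
      (∫ x, δc x * (if η * δc x < δy x then (1:ℝ) else 0) ∂μ) = ∫ x, δc x * fG x ∂μ)) :
    (∫ x, (δy x - η * δc x) *
        ((if η * δc x < δy x then (1:ℝ) else 0)
          - (if (1:ℝ)/2 < fG x then (1:ℝ) else 0)) ∂μ)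
      ≤ 2 * ((∫ x, δy x * (if η * δc x < δy x then (1:ℝ) else 0) ∂μ)
          - ∫ x, δy x * fG x ∂μ) := by
  set fOpt : 𝓧 → ℝ := fun x => if η * δc x < δy x then 1 else 0
  have hOptm : Measurable fOpt :=
    Measurable.ite (measurableSet_lt (hcm.const_mul η) hym) measurable_const measurable_const
  have hOpt01 : ∀ x, fOpt x ∈ Icc (0 : ℝ) 1 := fun _ => ite_one_zero_mem_Icc _
  have hG01 : ∀ x, fG x ∈ Icc (0 : ℝ) 1 := fun x =>
    hfG x ▸ integral_mem_Icc_zero_one fun θ => by rcases hfθ θ x with h | h <;> simp [h]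
  set fMV : 𝓧 → ℝ := fun x => if 1 / 2 < fG x then 1 else 0
  have hMVm : Measurable fMV :=
    Measurable.ite (measurableSet_lt measurable_const hGm) measurable_const measurable_const
  have hMV01 : ∀ x, fMV x ∈ Icc (0 : ℝ) 1 := fun _ => ite_one_zero_mem_Icc _
  have hg := hy.sub (hc.const_mul η)
  have hregret : ∫ x, δy x * fOpt x ∂μ - ∫ x, δy x * fG x ∂μ
      = ∫ x, (δy x - η * δc x) * (fOpt x - fG x) ∂μ := by
    rw [integral_sub_const_mul_mul_sub η hy hc hOptm hGm hOpt01 hG01]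
    rcases hcase with rfl | ⟨-, hK⟩
    · ring
    · rw [hK]; ring
  rw [hregret, ← integral_const_mul]
  exact integral_mono (hg.mul_sub_of_mem_Icc hOptm hMVm hOpt01 hMV01)
    ((hg.mul_sub_of_mem_Icc hOptm hGm hOpt01 hG01).const_mul 2)
    fun x => majorityVote_excess_le_two_mul (hG01 x)

/-- `L(f_mv,ρ) ≤ 2 R(f_G,ρ)`.  Here `fG x = ∫ f_θ(x) dρ(θ)` is the Gibbs rule
built from a `{0,1}`-valued family `f_θ`, `Bρ = E[δc·fG]` its cost (assumed above the
minimal attainable cost `E[δc·1{δc<0}]`), the tie set `{δy = η δc}` is null, `η ≥ 0` is the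
multiplier of the optimal rule `f*(x) = 1{δy(x) − η δc(x) > 0}` for budget `Bρ` (with
`K(f*) = Bρ` whenever `η > 0`), `L(f) = E[(δy − η δc)(f* − f)]` and `R(f) = W(f*) − W(f)`. -/
theorem stmt15 {Θ 𝓧 : Type*} [MeasurableSpace Θ] [MeasurableSpace 𝓧]
    (μ : Measure 𝓧) [IsProbabilityMeasure μ]
    (ρ : Measure Θ) [IsProbabilityMeasure ρ]
    (δy δc : 𝓧 → ℝ) (hym : Measurable δy) (hcm : Measurable δc)
    (hy : Integrable δy μ) (hc : Integrable δc μ)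
    (fθ : Θ → 𝓧 → ℝ) (hfθ : ∀ θ x, fθ θ x = 0 ∨ fθ θ x = 1)
    (fG : 𝓧 → ℝ) (hfG : ∀ x, fG x = ∫ θ, fθ θ x ∂ρ) (hGm : Measurable fG)
    (η : ℝ) (hη : 0 ≤ η)
    (hBlow : (∫ x, (if δc x < 0 then δc x else 0) ∂μ) < ∫ x, δc x * fG x ∂μ)
    (htie : μ {x | δy x = η * δc x} = 0)
    (hcase : η = 0 ∨ (0 < η ∧
      (∫ x, δc x * (if η * δc x < δy x then (1:ℝ) else 0) ∂μ) = ∫ x, δc x * fG x ∂μ)) :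
    (∫ x, (δy x - η * δc x) *
        ((if η * δc x < δy x then (1:ℝ) else 0)
          - (if (1:ℝ)/2 < fG x then (1:ℝ) else 0)) ∂μ)
      ≤ 2 * ((∫ x, δy x * (if η * δc x < δy x then (1:ℝ) else 0) ∂μ)
          - ∫ x, δy x * fG x ∂μ) :=
  stmt15_general μ ρ δy δc hym hcm hy hc fθ hfθ fG hfG hGm η hcase
end
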